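/- arXiv:1105.2142 — 3 statements merged into one kernel-verified Lean document; each statement's English description precedes it below -/
import Mathlib

section
/- Let Gⁱ be a spray on U that is projectively metrizable: there exist a Finsler function F on U with geodesic coefficients G_Fⁱ and a smooth, positively 1-homogeneous function P on U × (ℝⁿ∖{0}) with Gⁱ = G_Fⁱ + P yⁱ. Then the semi-basic 1-form θᵢ = ∂F/∂yⁱ satisfies at every point of U × (ℝⁿ∖{0}): (A1) yⁱθᵢ = F > 0; (A2) the 2n×2n matrix of dθ has rank 2n−2; (D1) yʲ ∂θᵢ/∂yʲ = 0; (D2) ∂θᵢ/∂yʲ = ∂θⱼ/∂yⁱ; (D3) δθᵢ/δxʲ = δθⱼ/δxⁱ, where δ/δxʲ is taken with respect to the connection Nᵏⱼ = ∂Gᵏ/∂yʲ of the given spray G. (Necessity part of the projective metrizability theorem.) -/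
namespace PM

abbrev E (n : ℕ) := (Fin n → ℝ) × (Fin n → ℝ)

noncomputable def pdx {n : ℕ} (i : Fin n) (f : E n → ℝ) (z : E n) : ℝ :=
  fderiv ℝ f z (Pi.single i 1, 0)

noncomputable def pdy {n : ℕ} (i : Fin n) (f : E n → ℝ) (z : E n) : ℝ :=
  fderiv ℝ f z (0, Pi.single i 1)

def Dom {n : ℕ} (U : Set (Fin n → ℝ)) : Set (E n) := U ×ˢ {y : Fin n → ℝ | y ≠ 0}

/-- A spray in local coordinates: an `n`-tuple of smooth functions on
`U × (ℝⁿ∖{0})`, positively `2`-homogeneous in `y`. -/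
def IsSpray {n : ℕ} (U : Set (Fin n → ℝ)) (G : Fin n → E n → ℝ) : Prop :=
  (∀ i, ContDiffOn ℝ (⊤ : ℕ∞) (G i) (Dom U)) ∧
  ∀ i, ∀ x ∈ U, ∀ y : Fin n → ℝ, y ≠ 0 → ∀ L : ℝ, 0 < L →
    G i (x, L • y) = L ^ 2 * G i (x, y)

/-- Nonlinear connection `Nⁱⱼ = ∂Gⁱ/∂yʲ`. -/
noncomputable def Nc {n : ℕ} (G : Fin n → E n → ℝ) (i j : Fin n) (z : E n) : ℝ :=
  pdy j (G i) z

/-- Horizontal derivative `δf/δxʲ = ∂f/∂xʲ − Nᵏⱼ ∂f/∂yᵏ`. -/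
noncomputable def delx {n : ℕ} (G : Fin n → E n → ℝ) (j : Fin n) (f : E n → ℝ) (z : E n) : ℝ :=
  pdx j f z - ∑ k, Nc G k j z * pdy k f z

/-- Spray derivative `S(f) = yᵏ ∂f/∂xᵏ − 2Gᵏ ∂f/∂yᵏ`. -/
noncomputable def Sder {n : ℕ} (G : Fin n → E n → ℝ) (f : E n → ℝ) (z : E n) : ℝ :=
  (∑ k, z.2 k * pdx k f z) - 2 * ∑ k, G k z * pdy k f z

/-- Curvature tensor `Rⁱⱼₖ = δNⁱⱼ/δxᵏ − δNⁱₖ/δxʲ`. -/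
noncomputable def Rcurv {n : ℕ} (G : Fin n → E n → ℝ) (i j k : Fin n) (z : E n) : ℝ :=
  delx G k (Nc G i j) z - delx G j (Nc G i k) z

/-- Jacobi endomorphism `Rⁱⱼ = 2 δGⁱ/δxʲ − S(Nⁱⱼ) + Nⁱₖ Nᵏⱼ`. -/
noncomputable def RJac {n : ℕ} (G : Fin n → E n → ℝ) (i j : Fin n) (z : E n) : ℝ :=
  2 * delx G j (G i) z - Sder G (Nc G i j) z + ∑ k, Nc G i k z * Nc G k j z

noncomputable def sq {n : ℕ} (F : E n → ℝ) : E n → ℝ := fun w => F w ^ 2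

/-- The `2n×2n` matrix of `dθ` for a semi-basic 1-form `θ`. -/
noncomputable def dthetaMat {n : ℕ} (θ : Fin n → E n → ℝ) (z : E n) :
    Matrix (Fin n ⊕ Fin n) (Fin n ⊕ Fin n) ℝ :=
  Matrix.fromBlocks
    (Matrix.of fun i j => pdx i (θ j) z - pdx j (θ i) z)
    (Matrix.of fun i j => -(pdy j (θ i) z))
    (Matrix.of fun i j => pdy i (θ j) z)
    0

/-- Finsler function in local coordinates. -/
def IsFinsler {n : ℕ} (U : Set (Fin n → ℝ)) (F : E n → ℝ) : Prop :=
  ContinuousOn F (U ×ˢ (Set.univ : Set (Fin n → ℝ))) ∧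
  ContDiffOn ℝ (⊤ : ℕ∞) F (Dom U) ∧
  (∀ z ∈ Dom U, 0 < F z) ∧
  (∀ x ∈ U, F (x, 0) = 0) ∧
  (∀ x ∈ U, ∀ y : Fin n → ℝ, ∀ L : ℝ, 0 < L → F (x, L • y) = L * F (x, y)) ∧
  (∀ z ∈ Dom U,
    (Matrix.of (fun i j : Fin n => (1 / 2 : ℝ) * pdy i (pdy j (sq F)) z)).rank = n)

/-- Geodesic coefficients of a Finsler function:
`yᵏ ∂²F²/∂xᵏ∂yⁱ − 2G_Fᵏ ∂²F²/∂yᵏ∂yⁱ = ∂F²/∂xⁱ`. -/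
def IsGeodesicCoeffs {n : ℕ} (U : Set (Fin n → ℝ)) (F : E n → ℝ)
    (GF : Fin n → E n → ℝ) : Prop :=
  (∀ i, ContDiffOn ℝ (⊤ : ℕ∞) (GF i) (Dom U)) ∧
  ∀ z ∈ Dom U, ∀ i : Fin n,
    (∑ k, z.2 k * pdx k (pdy i (sq F)) z)
      - 2 * ∑ k, GF k z * pdy k (pdy i (sq F)) z = pdx i (sq F) z

/-- Positively 1-homogeneous in `y`. -/
def PosHomog1 {n : ℕ} (U : Set (Fin n → ℝ)) (P : E n → ℝ) : Prop :=
  ∀ x ∈ U, ∀ y : Fin n → ℝ, y ≠ 0 → ∀ L : ℝ, 0 < L → P (x, L • y) = L * P (x, y)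

/-- A spray is projectively metrizable if `Gⁱ = G_Fⁱ + P yⁱ` for a Finsler
function `F` with geodesic coefficients `G_Fⁱ` and a smooth positively
1-homogeneous `P`. -/
def ProjectivelyMetrizable {n : ℕ} (U : Set (Fin n → ℝ)) (G : Fin n → E n → ℝ) : Prop :=
  ∃ (F : E n → ℝ) (GF : Fin n → E n → ℝ) (P : E n → ℝ),
    IsFinsler U F ∧ IsGeodesicCoeffs U F GF ∧
    ContDiffOn ℝ (⊤ : ℕ∞) P (Dom U) ∧ PosHomog1 U P ∧
    ∀ z ∈ Dom U, ∀ i, G i z = GF i z + P z * z.2 i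


open scoped ContDiff Topology

variable {n : ℕ} {U : Set (Fin n → ℝ)}

theorem isOpen_dom (hU : IsOpen U) : IsOpen (Dom U) :=
  hU.prod isOpen_ne

theorem dom_nhds (hU : IsOpen U) {z : E n} (hz : z ∈ Dom U) : Dom U ∈ 𝓝 z :=
  (isOpen_dom hU).mem_nhds hz

/-- Abbreviation for smooth on the domain. -/
abbrev Sm (U : Set (Fin n → ℝ)) (f : E n → ℝ) : Prop := ContDiffOn ℝ ∞ f (Dom U)

theorem smDiff (hU : IsOpen U) {f : E n → ℝ} (hf : Sm U f) {z : E n} (hz : z ∈ Dom U) :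
    DifferentiableAt ℝ f z :=
  (hf.contDiffAt (dom_nhds hU hz)).differentiableAt (by simp)

theorem sm_fd (hU : IsOpen U) {f : E n → ℝ} (hf : Sm U f) (v : E n) :
    Sm U (fun z => fderiv ℝ f z v) := by
  have h1 : ContDiffOn ℝ ∞ (fderiv ℝ f) (Dom U) :=
    hf.fderiv_of_isOpen (isOpen_dom hU) (le_of_eq rfl)
  exact ((ContinuousLinearMap.apply ℝ ℝ v).contDiff).comp_contDiffOn h1

theorem sm_pdx (hU : IsOpen U) {f : E n → ℝ} (hf : Sm U f) (i : Fin n) : Sm U (pdx i f) :=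
  sm_fd hU hf _

theorem sm_pdy (hU : IsOpen U) {f : E n → ℝ} (hf : Sm U f) (i : Fin n) : Sm U (pdy i f) :=
  sm_fd hU hf _

theorem fd_congr (hU : IsOpen U) {f g : E n → ℝ} {z : E n} (hz : z ∈ Dom U)
    (h : ∀ w ∈ Dom U, f w = g w) (v : E n) : fderiv ℝ f z v = fderiv ℝ g z v := by
  have he : f =ᶠ[nhds z] g := by
    filter_upwards [dom_nhds hU hz] with w hw using h w hw
  rw [he.fderiv_eq]

theorem pdx_congr (hU : IsOpen U) {f g : E n → ℝ} {z : E n} (hz : z ∈ Dom U)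
    (h : ∀ w ∈ Dom U, f w = g w) (i : Fin n) : pdx i f z = pdx i g z :=
  fd_congr hU hz h _

theorem pdy_congr (hU : IsOpen U) {f g : E n → ℝ} {z : E n} (hz : z ∈ Dom U)
    (h : ∀ w ∈ Dom U, f w = g w) (i : Fin n) : pdy i f z = pdy i g z :=
  fd_congr hU hz h _

theorem fd_mul {f g : E n → ℝ} {z : E n} (hf : DifferentiableAt ℝ f z)
    (hg : DifferentiableAt ℝ g z) (v : E n) :
    fderiv ℝ (fun w => f w * g w) z v = fderiv ℝ f z v * g z + f z * fderiv ℝ g z v := by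
  rw [fderiv_fun_mul hf hg]
  simp only [ContinuousLinearMap.add_apply, ContinuousLinearMap.smul_apply, smul_eq_mul]
  ring

theorem fd_sum {ι : Type*} [Fintype ι] {A : ι → E n → ℝ} {z : E n}
    (h : ∀ i, DifferentiableAt ℝ (A i) z) (v : E n) :
    fderiv ℝ (fun w => ∑ i, A i w) z v = ∑ i, fderiv ℝ (A i) z v := by
  rw [fderiv_fun_sum (fun i _ => h i)]
  simp

theorem fd_sub {f g : E n → ℝ} {z : E n} (hf : DifferentiableAt ℝ f z)
    (hg : DifferentiableAt ℝ g z) (v : E n) :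
    fderiv ℝ (fun w => f w - g w) z v = fderiv ℝ f z v - fderiv ℝ g z v := by
  rw [fderiv_fun_sub hf hg]; simp

theorem fd_add {f g : E n → ℝ} {z : E n} (hf : DifferentiableAt ℝ f z)
    (hg : DifferentiableAt ℝ g z) (v : E n) :
    fderiv ℝ (fun w => f w + g w) z v = fderiv ℝ f z v + fderiv ℝ g z v := by
  rw [fderiv_fun_add hf hg]; simp

theorem fd_const_mul {f : E n → ℝ} {z : E n} (hf : DifferentiableAt ℝ f z) (c : ℝ) (v : E n) :
    fderiv ℝ (fun w => c * f w) z v = c * fderiv ℝ f z v := by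
  rw [fderiv_const_mul hf]; simp

theorem fd_pdy (f : E n → ℝ) (z : E n) (i : Fin n) :
    fderiv ℝ f z ((0 : Fin n → ℝ), Pi.single i 1) = pdy i f z := rfl

theorem fd_pdx (f : E n → ℝ) (z : E n) (i : Fin n) :
    fderiv ℝ f z ((Pi.single i 1 : Fin n → ℝ), 0) = pdx i f z := rfl

theorem fd_coord2 (k : Fin n) (z v : E n) :
    fderiv ℝ (fun w : E n => w.2 k) z v = v.2 k := by
  have : (fun w : E n => w.2 k) = ((ContinuousLinearMap.proj k).comp
      (ContinuousLinearMap.snd ℝ (Fin n → ℝ) (Fin n → ℝ)) : E n →L[ℝ] ℝ) := rfl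
  rw [this, ContinuousLinearMap.fderiv]
  rfl


theorem fd_clm_apply_const {c : E n → E n →L[ℝ] ℝ} {z : E n}
    (hc : DifferentiableAt ℝ c z) (b v : E n) :
    fderiv ℝ (fun w => c w b) z v = (fderiv ℝ c z v) b := by
  have h := fderiv_clm_apply (c := c) (u := fun _ => b) hc (differentiableAt_const b)
  rw [show (fun w => c w b) = fun w => (c w) ((fun _ : E n => b) w) from rfl, h]
  simp

theorem fd_comm (hU : IsOpen U) {f : E n → ℝ} (hf : Sm U f) {z : E n} (hz : z ∈ Dom U)
    (a b : E n) :
    fderiv ℝ (fun w => fderiv ℝ f w a) z b = fderiv ℝ (fun w => fderiv ℝ f w b) z a := by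
  have hder : ∀ᶠ w in 𝓝 z, HasFDerivAt f (fderiv ℝ f w) w := by
    filter_upwards [dom_nhds hU hz] with w hw using (smDiff hU hf hw).hasFDerivAt
  have hsm : Sm U f := hf
  have h1 : ContDiffOn ℝ ∞ (fderiv ℝ f) (Dom U) :=
    hf.fderiv_of_isOpen (isOpen_dom hU) (le_of_eq rfl)
  have hf' : DifferentiableAt ℝ (fderiv ℝ f) z :=
    (h1.contDiffAt (dom_nhds hU hz)).differentiableAt (by simp)
  have hsymm := second_derivative_symmetric_of_eventually hder hf'.hasFDerivAt a b
  rw [fd_clm_apply_const hf' a b, fd_clm_apply_const hf' b a, hsymm]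

theorem pdy_pdy_comm (hU : IsOpen U) {f : E n → ℝ} (hf : Sm U f) {z : E n} (hz : z ∈ Dom U)
    (i j : Fin n) : pdy i (pdy j f) z = pdy j (pdy i f) z :=
  fd_comm hU hf hz _ _

theorem pdx_pdy_comm (hU : IsOpen U) {f : E n → ℝ} (hf : Sm U f) {z : E n} (hz : z ∈ Dom U)
    (i j : Fin n) : pdx j (pdy i f) z = pdy i (pdx j f) z :=
  fd_comm hU hf hz _ _

/-- decomposition of a `y`-direction vector into coordinates -/
theorem fd_y_sum (f : E n → ℝ) (z : E n) (v : Fin n → ℝ) :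
    fderiv ℝ f z ((0 : Fin n → ℝ), v) = ∑ k, v k * pdy k f z := by
  have hv : (((0 : Fin n → ℝ), v) : E n) = ∑ k, v k • (((0 : Fin n → ℝ), Pi.single k 1) : E n) := by
    refine Prod.ext ?_ ?_
    · rw [Prod.fst_sum]; simp
    · rw [Prod.snd_sum]
      funext j
      simp [Pi.single_apply, Finset.sum_ite_eq, Finset.sum_ite_eq']
  rw [hv, map_sum]
  simp only [map_smul, smul_eq_mul]
  rfl

/-- positive homogeneity of degree `m` in `y` on the domain -/
def Hg (U : Set (Fin n → ℝ)) (m : ℕ) (f : E n → ℝ) : Prop :=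
  ∀ w ∈ Dom U, ∀ L : ℝ, 0 < L → f (w.1, L • w.2) = L ^ m * f w

/-- Euler's identity -/
theorem euler (hU : IsOpen U) {f : E n → ℝ} {z : E n} (hz : z ∈ Dom U)
    (hdf : DifferentiableAt ℝ f z) {d : ℕ} (hhom : Hg U d f) :
    ∑ k, z.2 k * pdy k f z = d * f z := by
  rw [← fd_y_sum]
  have hcurve : HasDerivAt (fun t : ℝ => ((z.1, t • z.2) : E n)) (((0 : Fin n → ℝ), z.2)) 1 := by
    have h1 : HasDerivAt (fun t : ℝ => t • z.2) ((1 : ℝ) • z.2) 1 :=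
      (hasDerivAt_id 1).smul_const z.2
    rw [one_smul] at h1
    exact (hasDerivAt_const (1:ℝ) z.1).prodMk h1
  have hone : ((z.1, (1:ℝ) • z.2) : E n) = z := by rw [one_smul]
  have hdf' : HasFDerivAt f (fderiv ℝ f z) ((z.1, (1:ℝ) • z.2) : E n) := by
    rw [hone]; exact hdf.hasFDerivAt
  have hcomp := hdf'.comp_hasDerivAt 1 hcurve
  have heq : (fun t : ℝ => f (z.1, t • z.2)) =ᶠ[𝓝 (1:ℝ)] fun t => t ^ d * f z := by
    filter_upwards [isOpen_Ioi.mem_nhds (show (0:ℝ) < 1 from one_pos)] with t ht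
    exact hhom z hz t ht
  have h2 : HasDerivAt (fun t : ℝ => t ^ d * f z) ((d : ℝ) * f z) 1 := by
    simpa using (hasDerivAt_pow d (1:ℝ)).mul_const (f z)
  have h3 : HasDerivAt (fun t : ℝ => f (z.1, t • z.2)) ((d:ℝ) * f z) 1 :=
    h2.congr_of_eventuallyEq heq
  exact hcomp.unique h3


/-- The scaling map `(x, y) ↦ (x, L • y)` as a continuous linear map. -/
noncomputable def sig (L : ℝ) : E n →L[ℝ] E n :=
  (ContinuousLinearMap.id ℝ (Fin n → ℝ)).prodMap (L • ContinuousLinearMap.id ℝ (Fin n → ℝ))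

theorem sig_apply (L : ℝ) (w : E n) : sig L w = (w.1, L • w.2) := rfl

theorem mem_dom_smul {z : E n} (hz : z ∈ Dom U) {L : ℝ} (hL : 0 < L) :
    ((z.1, L • z.2) : E n) ∈ Dom U :=
  ⟨hz.1, smul_ne_zero hL.ne' hz.2⟩

theorem fd_homog (hU : IsOpen U) {f : E n → ℝ} (hf : Sm U f) {m : ℕ} (hhom : Hg U m f)
    {z : E n} (hz : z ∈ Dom U) {L : ℝ} (hL : 0 < L) (v : E n) :
    fderiv ℝ f (z.1, L • z.2) (v.1, L • v.2) = L ^ m * fderiv ℝ f z v := by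
  have hzL : ((z.1, L • z.2) : E n) ∈ Dom U := mem_dom_smul hz hL
  have hdfL : DifferentiableAt ℝ f ((z.1, L • z.2) : E n) := smDiff hU hf hzL
  have hdsig : DifferentiableAt ℝ (fun w : E n => sig (n := n) L w) z :=
    (sig L).differentiableAt
  have hcomp : fderiv ℝ (fun w => f (sig L w)) z
      = (fderiv ℝ f ((z.1, L • z.2) : E n)).comp (sig L : E n →L[ℝ] E n) := by
    have h := fderiv_comp (𝕜 := ℝ) z (show DifferentiableAt ℝ f ((sig L) z) from hdfL) hdsig
    rw [show (fun w => f (sig L w)) = f ∘ (fun w => sig (n := n) L w) from rfl, h,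
      (sig (n := n) L).fderiv]
    rfl
  have heq : (fun w => f (sig (n := n) L w)) =ᶠ[𝓝 z] fun w => L ^ m * f w := by
    filter_upwards [dom_nhds hU hz] with w hw
    exact hhom w hw L hL
  have hdf : DifferentiableAt ℝ f z := smDiff hU hf hz
  have hR : fderiv ℝ (fun w => L ^ m * f w) z v = L ^ m * fderiv ℝ f z v :=
    fd_const_mul hdf _ v
  calc fderiv ℝ f ((z.1, L • z.2) : E n) (v.1, L • v.2)
      = (fderiv ℝ f ((z.1, L • z.2) : E n)).comp (sig L : E n →L[ℝ] E n) v := rfl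
    _ = fderiv ℝ (fun w => f (sig (n := n) L w)) z v := by rw [hcomp]
    _ = fderiv ℝ (fun w => L ^ m * f w) z v := by rw [heq.fderiv_eq]
    _ = L ^ m * fderiv ℝ f z v := hR

theorem hg_pdx (hU : IsOpen U) {f : E n → ℝ} (hf : Sm U f) {m : ℕ} (hhom : Hg U m f)
    (i : Fin n) : Hg U m (pdx i f) := by
  intro z hz L hL
  have h := fd_homog hU hf hhom hz hL ((Pi.single i 1, 0) : E n)
  simpa [pdx] using h

theorem hg_pdy (hU : IsOpen U) {f : E n → ℝ} (hf : Sm U f) {d : ℕ} (hhom : Hg U (d + 1) f)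
    (i : Fin n) : Hg U d (pdy i f) := by
  intro z hz L hL
  have h := fd_homog hU hf hhom hz hL (((0 : Fin n → ℝ), Pi.single i 1) : E n)
  have h2 : fderiv ℝ f ((z.1, L • z.2) : E n) ((0 : Fin n → ℝ), L • (Pi.single i 1 : Fin n → ℝ))
      = L * pdy i f ((z.1, L • z.2) : E n) := by
    have : (((0 : Fin n → ℝ), L • (Pi.single i 1 : Fin n → ℝ)) : E n)
        = L • (((0 : Fin n → ℝ), Pi.single i 1) : E n) := by
      refine Prod.ext ?_ ?_ <;> simp
    rw [this, map_smul, smul_eq_mul]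
    rfl
  rw [h2] at h
  have : L * pdy i f ((z.1, L • z.2) : E n) = L * (L ^ d * pdy i f z) := by
    rw [h, show (fderiv ℝ f z) ((0 : Fin n → ℝ), Pi.single i 1) = pdy i f z from rfl]; ring
  exact mul_left_cancel₀ hL.ne' this

theorem hg_mul {f g : E n → ℝ} {a b : ℕ} (hf : Hg U a f) (hg : Hg U b g) :
    Hg U (a + b) (fun w => f w * g w) := by
  intro z hz L hL
  simp only []
  rw [hf z hz L hL, hg z hz L hL, pow_add]
  ring


theorem split_sum {c a b : Fin n → ℝ} (t Fz : ℝ) :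
    ∑ k, c k * (2 * (a k * t + Fz * b k))
      = 2 * t * (∑ k, c k * a k) + 2 * Fz * ∑ k, c k * b k := by
  rw [Finset.mul_sum, Finset.mul_sum, ← Finset.sum_add_distrib]
  exact Finset.sum_congr rfl fun k _ => by ring

section Finsler

variable (hU : IsOpen U) {F : E n → ℝ} (hFs : Sm U F)

include hU hFs

omit hU in
theorem sm_sq : Sm U (sq F) := hFs.pow 2

omit hU hFs in
theorem sq_eq_mul : sq F = fun w => F w * F w := by
  funext w; simp [sq, pow_two]

omit hU hFs in
theorem hg_sq (hFh : Hg U 1 F) : Hg U 2 (sq F) := by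
  rw [sq_eq_mul]
  exact hg_mul hFh hFh

theorem pdy_sq {z : E n} (hz : z ∈ Dom U) (i : Fin n) :
    pdy i (sq F) z = 2 * F z * pdy i F z := by
  have hd : DifferentiableAt ℝ F z := smDiff hU hFs hz
  rw [sq_eq_mul]
  show fderiv ℝ (fun w => F w * F w) z _ = _
  rw [fd_mul hd hd]
  simp only [fd_pdy, fd_pdx]
  ring

theorem pdx_sq {z : E n} (hz : z ∈ Dom U) (i : Fin n) :
    pdx i (sq F) z = 2 * F z * pdx i F z := by
  have hd : DifferentiableAt ℝ F z := smDiff hU hFs hz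
  rw [sq_eq_mul]
  show fderiv ℝ (fun w => F w * F w) z _ = _
  rw [fd_mul hd hd]
  simp only [fd_pdy, fd_pdx]
  ring

/-- metric tensor entries -/
theorem half_pdy_pdy_sq {z : E n} (hz : z ∈ Dom U) (i j : Fin n) :
    (1 / 2 : ℝ) * pdy i (pdy j (sq F)) z
      = pdy i F z * pdy j F z + F z * pdy i (pdy j F) z := by
  have h1 : pdy i (pdy j (sq F)) z
      = fderiv ℝ (fun w => (2 * F w) * pdy j F w) z ((0 : Fin n → ℝ), Pi.single i 1) := by
    refine fd_congr hU hz (fun w hw => ?_) _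
    rw [pdy_sq hU hFs hw j]
  have hdF : DifferentiableAt ℝ (fun w => 2 * F w) z := (smDiff hU hFs hz).const_mul 2
  have hdθ : DifferentiableAt ℝ (pdy j F) z := smDiff hU (sm_pdy hU hFs j) hz
  rw [h1, fd_mul hdF hdθ]
  have h2 : fderiv ℝ (fun w => 2 * F w) z ((0 : Fin n → ℝ), Pi.single i 1)
      = 2 * pdy i F z := fd_const_mul (smDiff hU hFs hz) 2 _
  rw [h2]
  simp only [fd_pdy]
  ring

omit hFs in
/-- differentiating `w ↦ ∑ k, w.2 k * A k w` in a `y` direction -/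
theorem pdy_sum_coord_mul {A : Fin n → E n → ℝ} (hA : ∀ k, Sm U (A k)) {z : E n}
    (hz : z ∈ Dom U) (j : Fin n) :
    pdy j (fun w => ∑ k, w.2 k * A k w) z = A j z + ∑ k, z.2 k * pdy j (A k) z := by
  have hc : ∀ k : Fin n, DifferentiableAt ℝ (fun w : E n => w.2 k) z := by
    intro k
    exact ((ContinuousLinearMap.proj k).comp
      (ContinuousLinearMap.snd ℝ (Fin n → ℝ) (Fin n → ℝ))).differentiableAt
  have hd : ∀ k : Fin n, DifferentiableAt ℝ (A k) z := fun k => smDiff hU (hA k) hz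
  show fderiv ℝ (fun w => ∑ k, w.2 k * A k w) z _ = _
  rw [fd_sum (fun k => (hc k).fun_mul (hd k))]
  have : ∀ k : Fin n,
      fderiv ℝ (fun w : E n => w.2 k * A k w) z ((0 : Fin n → ℝ), Pi.single j 1)
        = (Pi.single j 1 : Fin n → ℝ) k * A k z + z.2 k * pdy j (A k) z := by
    intro k
    rw [fd_mul (hc k) (hd k), fd_coord2, fd_pdy]
  rw [Finset.sum_congr rfl (fun k _ => this k), Finset.sum_add_distrib]
  congr 1
  simp [Pi.single_apply]

omit hFs in
/-- differentiating `w ↦ ∑ k, B k w * A k w` in a `y` direction -/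
theorem pdy_sum_mul {A B : Fin n → E n → ℝ} (hA : ∀ k, Sm U (A k)) (hB : ∀ k, Sm U (B k))
    {z : E n} (hz : z ∈ Dom U) (j : Fin n) :
    pdy j (fun w => ∑ k, B k w * A k w) z
      = ∑ k, (pdy j (B k) z * A k z + B k z * pdy j (A k) z) := by
  have hd : ∀ k : Fin n, DifferentiableAt ℝ (A k) z := fun k => smDiff hU (hA k) hz
  have hdB : ∀ k : Fin n, DifferentiableAt ℝ (B k) z := fun k => smDiff hU (hB k) hz
  show fderiv ℝ _ z _ = _
  rw [fd_sum (fun k => (hdB k).fun_mul (hd k))]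
  refine Finset.sum_congr rfl fun k _ => ?_
  rw [fd_mul (hdB k) (hd k), fd_pdy, fd_pdy]

section Geodesic

variable (hFpos : ∀ z ∈ Dom U, 0 < F z) (hFh : Hg U 1 F)
variable {GF : Fin n → E n → ℝ} (hGFs : ∀ k, Sm U (GF k))
variable (hgeo : ∀ z ∈ Dom U, ∀ i : Fin n,
    (∑ k, z.2 k * pdx k (pdy i (sq F)) z)
      - 2 * ∑ k, GF k z * pdy k (pdy i (sq F)) z = pdx i (sq F) z)

omit hFs in
include hFh in
theorem eulerF {z : E n} (hz : z ∈ Dom U) (hd : DifferentiableAt ℝ F z) :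
    ∑ k, z.2 k * pdy k F z = F z := by
  have := euler hU hz hd (d := 1) hFh
  simpa using this

include hFh in
theorem eulerTheta {z : E n} (hz : z ∈ Dom U) (i : Fin n) :
    ∑ k, z.2 k * pdy k (pdy i F) z = 0 := by
  have h0 : Hg U 0 (pdy i F) := hg_pdy hU hFs (d := 0) hFh i
  have := euler hU hz (smDiff hU (sm_pdy hU hFs i) hz) (d := 0) h0
  simpa using this

include hFh in
theorem eulerFx {z : E n} (hz : z ∈ Dom U) (i : Fin n) :
    ∑ k, z.2 k * pdy k (pdx i F) z = pdx i F z := by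
  have h1 : Hg U 1 (pdx i F) := hg_pdx hU hFs hFh i
  have := euler hU hz (smDiff hU (sm_pdx hU hFs i) hz) (d := 1) h1
  simpa using this

include hFh in
theorem eulerLy {z : E n} (hz : z ∈ Dom U) (i : Fin n) :
    ∑ k, z.2 k * pdy k (pdy i (sq F)) z = pdy i (sq F) z := by
  have h2 : Hg U 2 (sq F) := hg_sq hFh
  have h1 : Hg U 1 (pdy i (sq F)) := hg_pdy hU (sm_sq hFs) (d := 1) h2 i
  have := euler hU hz (smDiff hU (sm_pdy hU (sm_sq hFs) i) hz) (d := 1) h1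
  simpa using this

include hFh in
theorem eulerLx {z : E n} (hz : z ∈ Dom U) (i : Fin n) :
    ∑ k, z.2 k * pdy k (pdx i (sq F)) z = 2 * pdx i (sq F) z := by
  have h2 : Hg U 2 (sq F) := hg_sq hFh
  have h1 : Hg U 2 (pdx i (sq F)) := hg_pdx hU (sm_sq hFs) h2 i
  have := euler hU hz (smDiff hU (sm_pdx hU (sm_sq hFs) i) hz) (d := 2) h1
  simpa using this

include hFh hGFs hgeo in
theorem geoI1 {z : E n} (hz : z ∈ Dom U) :
    ∑ k, z.2 k * pdx k (sq F) z = 2 * ∑ k, GF k z * pdy k (sq F) z := by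
  have hL : Sm U (sq F) := sm_sq hFs
  have hs : ∑ i, (z.2 i * ∑ k, z.2 k * pdx k (pdy i (sq F)) z
        - z.2 i * (2 * ∑ k, GF k z * pdy k (pdy i (sq F)) z))
      = ∑ i, z.2 i * pdx i (sq F) z := by
    refine Finset.sum_congr rfl fun i _ => ?_
    rw [← mul_sub, hgeo z hz i]
  rw [Finset.sum_sub_distrib] at hs
  have hT1 : ∑ i, z.2 i * ∑ k, z.2 k * pdx k (pdy i (sq F)) z
      = 2 * ∑ k, z.2 k * pdx k (sq F) z := by
    calc ∑ i, z.2 i * ∑ k, z.2 k * pdx k (pdy i (sq F)) z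
        = ∑ i, ∑ k, z.2 k * (z.2 i * pdx k (pdy i (sq F)) z) := by
          refine Finset.sum_congr rfl fun i _ => ?_
          rw [Finset.mul_sum]
          refine Finset.sum_congr rfl fun k _ => by ring
      _ = ∑ k, ∑ i, z.2 k * (z.2 i * pdx k (pdy i (sq F)) z) := Finset.sum_comm
      _ = ∑ k, z.2 k * (2 * pdx k (sq F) z) := by
          refine Finset.sum_congr rfl fun k _ => ?_
          rw [← Finset.mul_sum]
          congr 1
          calc ∑ i, z.2 i * pdx k (pdy i (sq F)) z
              = ∑ i, z.2 i * pdy i (pdx k (sq F)) z := by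
                refine Finset.sum_congr rfl fun i _ => ?_
                rw [pdx_pdy_comm hU hL hz i k]
            _ = 2 * pdx k (sq F) z := eulerLx hU hFs hFh hz k
      _ = 2 * ∑ k, z.2 k * pdx k (sq F) z := by
          rw [Finset.mul_sum]
          exact Finset.sum_congr rfl fun k _ => by ring
  have hT2 : ∑ i, z.2 i * (2 * ∑ k, GF k z * pdy k (pdy i (sq F)) z)
      = 2 * ∑ k, GF k z * pdy k (sq F) z := by
    calc ∑ i, z.2 i * (2 * ∑ k, GF k z * pdy k (pdy i (sq F)) z)
        = ∑ i, ∑ k, 2 * GF k z * (z.2 i * pdy k (pdy i (sq F)) z) := by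
          refine Finset.sum_congr rfl fun i _ => ?_
          rw [Finset.mul_sum, Finset.mul_sum]
          refine Finset.sum_congr rfl fun k _ => by ring
      _ = ∑ k, ∑ i, 2 * GF k z * (z.2 i * pdy k (pdy i (sq F)) z) := Finset.sum_comm
      _ = ∑ k, 2 * GF k z * pdy k (sq F) z := by
          refine Finset.sum_congr rfl fun k _ => ?_
          rw [← Finset.mul_sum]
          congr 1
          calc ∑ i, z.2 i * pdy k (pdy i (sq F)) z
              = ∑ i, z.2 i * pdy i (pdy k (sq F)) z := by
                refine Finset.sum_congr rfl fun i _ => ?_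
                rw [pdy_pdy_comm hU hL hz k i]
            _ = pdy k (sq F) z := eulerLy hU hFs hFh hz k
      _ = 2 * ∑ k, GF k z * pdy k (sq F) z := by
          rw [Finset.mul_sum]
          exact Finset.sum_congr rfl fun k _ => by ring
  rw [hT1, hT2] at hs
  linarith

include hFh hGFs hgeo in
theorem geoI2 {z : E n} (hz : z ∈ Dom U) (j : Fin n) :
    pdx j (sq F) z + ∑ k, z.2 k * pdy j (pdx k (sq F)) z
      = 2 * ∑ k, (pdy j (GF k) z * pdy k (sq F) z + GF k z * pdy j (pdy k (sq F)) z) := by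
  have hL : Sm U (sq F) := sm_sq hFs
  have hA : ∀ k, Sm U (pdx k (sq F)) := fun k => sm_pdx hU hL k
  have hA' : ∀ k, Sm U (pdy k (sq F)) := fun k => sm_pdy hU hL k
  have hcong : pdy j (fun w => ∑ k, w.2 k * pdx k (sq F) w) z
      = pdy j (fun w => 2 * ∑ k, GF k w * pdy k (sq F) w) z := by
    refine pdy_congr hU hz (fun w hw => ?_) j
    exact geoI1 hU hFs hFh hGFs hgeo hw
  rw [pdy_sum_coord_mul hU hA hz j] at hcong
  have hdsum : DifferentiableAt ℝ (fun w => ∑ k, GF k w * pdy k (sq F) w) z := by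
    refine DifferentiableAt.fun_sum fun k _ => ?_
    exact (smDiff hU (hGFs k) hz).mul (smDiff hU (hA' k) hz)
  have hr : pdy j (fun w => 2 * ∑ k, GF k w * pdy k (sq F) w) z
      = 2 * pdy j (fun w => ∑ k, GF k w * pdy k (sq F) w) z := fd_const_mul hdsum 2 _
  rw [hr, pdy_sum_mul hU hA' hGFs hz j] at hcong
  exact hcong

include hFpos hFh hGFs hgeo in
theorem delxF {z : E n} (hz : z ∈ Dom U) (j : Fin n) :
    pdx j F z - ∑ k, Nc GF k j z * pdy k F z = 0 := by
  have hL : Sm U (sq F) := sm_sq hFs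
  have h2 := geoI2 hU hFs hFh hGFs hgeo hz j
  have hrw1 : ∑ k, z.2 k * pdy j (pdx k (sq F)) z
      = ∑ k, z.2 k * pdx k (pdy j (sq F)) z := by
    refine Finset.sum_congr rfl fun k _ => ?_
    rw [pdx_pdy_comm hU hL hz j k]
  have hrw2 : ∑ k, (pdy j (GF k) z * pdy k (sq F) z + GF k z * pdy j (pdy k (sq F)) z)
      = (∑ k, pdy j (GF k) z * pdy k (sq F) z)
        + ∑ k, GF k z * pdy k (pdy j (sq F)) z := by
    rw [Finset.sum_add_distrib]
    congr 1
    refine Finset.sum_congr rfl fun k _ => ?_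
    rw [pdy_pdy_comm hU hL hz j k]
  rw [hrw1, hrw2] at h2
  have hg := hgeo z hz j
  have key1 : ∑ k, pdy j (GF k) z * pdy k (sq F) z = pdx j (sq F) z := by linarith
  have hF0 : F z ≠ 0 := (hFpos z hz).ne'
  have key2 : ∑ k, pdy j (GF k) z * pdy k (sq F) z
      = 2 * F z * ∑ k, Nc GF k j z * pdy k F z := by
    rw [Finset.mul_sum]
    refine Finset.sum_congr rfl fun k _ => ?_
    rw [pdy_sq hU hFs hz k]
    show pdy j (GF k) z * (2 * F z * pdy k F z)
        = 2 * F z * (pdy j (GF k) z * pdy k F z)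
    ring
  rw [key2, pdx_sq hU hFs hz j] at key1
  have : 2 * F z * (pdx j F z - ∑ k, Nc GF k j z * pdy k F z) = 0 := by linarith
  have h2F : (2 : ℝ) * F z ≠ 0 := by positivity
  exact (mul_eq_zero.mp this).resolve_left h2F

omit hFh in
theorem S1gen {f : E n → ℝ} (hf : Sm U f) {z : E n} (hz : z ∈ Dom U) (i j k : Fin n) :
    pdy j (pdx k (pdy i f)) z = pdy i (pdx k (pdy j f)) z := by
  have e1 : pdy j (pdx k (pdy i f)) z = pdy j (pdy i (pdx k f)) z :=
    pdy_congr hU hz (fun w hw => pdx_pdy_comm hU hf hw i k) j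
  have e2 : pdy j (pdy i (pdx k f)) z = pdy i (pdy j (pdx k f)) z :=
    pdy_pdy_comm hU (sm_pdx hU hf k) hz j i
  have e3 : pdy i (pdy j (pdx k f)) z = pdy i (pdx k (pdy j f)) z :=
    pdy_congr hU hz (fun w hw => (pdx_pdy_comm hU hf hw j k).symm) i
  rw [e1, e2, e3]

omit hFh in
theorem S2gen {f : E n → ℝ} (hf : Sm U f) {z : E n} (hz : z ∈ Dom U) (i j k : Fin n) :
    pdy j (pdy k (pdy i f)) z = pdy i (pdy k (pdy j f)) z := by
  have e1 : pdy j (pdy k (pdy i f)) z = pdy j (pdy i (pdy k f)) z :=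
    pdy_congr hU hz (fun w hw => pdy_pdy_comm hU hf hw k i) j
  have e2 : pdy j (pdy i (pdy k f)) z = pdy i (pdy j (pdy k f)) z :=
    pdy_pdy_comm hU (sm_pdy hU hf k) hz j i
  have e3 : pdy i (pdy j (pdy k f)) z = pdy i (pdy k (pdy j f)) z :=
    pdy_congr hU hz (fun w hw => (pdy_pdy_comm hU hf hw k j).symm) i
  rw [e1, e2, e3]

/-- derivative of `pdy i (sq F)` in an arbitrary direction -/
theorem fd_pdy_sq {z : E n} (hz : z ∈ Dom U) (i : Fin n) (v : E n) :
    fderiv ℝ (pdy i (sq F)) z v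
      = 2 * (fderiv ℝ F z v * pdy i F z + F z * fderiv ℝ (pdy i F) z v) := by
  have hcong : fderiv ℝ (pdy i (sq F)) z v
      = fderiv ℝ (fun w => (2 * F w) * pdy i F w) z v :=
    fd_congr hU hz (fun w hw => pdy_sq hU hFs hw i) v
  rw [hcong, fd_mul ((smDiff hU hFs hz).const_mul 2) (smDiff hU (sm_pdy hU hFs i) hz) v,
    fd_const_mul (smDiff hU hFs hz) 2 v]
  ring

theorem pdx_pdy_sq {z : E n} (hz : z ∈ Dom U) (i k : Fin n) :
    pdx k (pdy i (sq F)) z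
      = 2 * (pdx k F z * pdy i F z + F z * pdx k (pdy i F) z) := by
  have := fd_pdy_sq hU hFs hz i ((Pi.single k 1 : Fin n → ℝ), 0)
  simpa [fd_pdx] using this

theorem pdy_pdy_sq {z : E n} (hz : z ∈ Dom U) (i k : Fin n) :
    pdy k (pdy i (sq F)) z
      = 2 * (pdy k F z * pdy i F z + F z * pdy k (pdy i F) z) := by
  have := fd_pdy_sq hU hFs hz i ((0 : Fin n → ℝ), Pi.single k 1)
  simpa [fd_pdy] using this

include hGFs hgeo in
theorem geoI4 {z : E n} (hz : z ∈ Dom U) (i j : Fin n) :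
    pdx j (pdy i (sq F)) z + ∑ k, z.2 k * pdy j (pdx k (pdy i (sq F))) z
      - 2 * ∑ k, (pdy j (GF k) z * pdy k (pdy i (sq F)) z
          + GF k z * pdy j (pdy k (pdy i (sq F))) z)
      = pdy j (pdx i (sq F)) z := by
  have hL : Sm U (sq F) := sm_sq hFs
  have hA : ∀ k, Sm U (pdx k (pdy i (sq F))) := fun k => sm_pdx hU (sm_pdy hU hL i) k
  have hB : ∀ k, Sm U (pdy k (pdy i (sq F))) := fun k => sm_pdy hU (sm_pdy hU hL i) k
  have hd1 : DifferentiableAt ℝ (fun w => ∑ k, w.2 k * pdx k (pdy i (sq F)) w) z := by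
    refine DifferentiableAt.fun_sum fun k _ => ?_
    exact (((ContinuousLinearMap.proj k).comp
      (ContinuousLinearMap.snd ℝ (Fin n → ℝ) (Fin n → ℝ))).differentiableAt).mul
      (smDiff hU (hA k) hz)
  have hd2' : DifferentiableAt ℝ (fun w => ∑ k, GF k w * pdy k (pdy i (sq F)) w) z := by
    refine DifferentiableAt.fun_sum fun k _ => ?_
    exact (smDiff hU (hGFs k) hz).mul (smDiff hU (hB k) hz)
  have hd2 : DifferentiableAt ℝ (fun w => 2 * ∑ k, GF k w * pdy k (pdy i (sq F)) w) z :=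
    hd2'.const_mul 2
  have hcong : pdy j (fun w => (∑ k, w.2 k * pdx k (pdy i (sq F)) w)
        - 2 * ∑ k, GF k w * pdy k (pdy i (sq F)) w) z
      = pdy j (pdx i (sq F)) z := by
    refine pdy_congr hU hz (fun w hw => ?_) j
    exact hgeo w hw i
  have hsub : pdy j (fun w => (∑ k, w.2 k * pdx k (pdy i (sq F)) w)
        - 2 * ∑ k, GF k w * pdy k (pdy i (sq F)) w) z
      = pdy j (fun w => ∑ k, w.2 k * pdx k (pdy i (sq F)) w) z
        - pdy j (fun w => 2 * ∑ k, GF k w * pdy k (pdy i (sq F)) w) z :=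
    fd_sub hd1 hd2 _
  rw [hsub, pdy_sum_coord_mul hU hA hz j,
    show pdy j (fun w => 2 * ∑ k, GF k w * pdy k (pdy i (sq F)) w) z
      = 2 * pdy j (fun w => ∑ k, GF k w * pdy k (pdy i (sq F)) w) z from fd_const_mul hd2' 2 _,
    pdy_sum_mul hU hB hGFs hz j] at hcong
  linarith [hcong]

include hGFs hgeo in
theorem Bsym {z : E n} (hz : z ∈ Dom U) (i j : Fin n) :
    pdx j (pdy i (sq F)) z - ∑ k, pdy j (GF k) z * pdy k (pdy i (sq F)) z
      = pdx i (pdy j (sq F)) z - ∑ k, pdy i (GF k) z * pdy k (pdy j (sq F)) z := by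
  have hL : Sm U (sq F) := sm_sq hFs
  have h1 := geoI4 hU hFs hGFs hgeo hz i j
  have h2 := geoI4 hU hFs hGFs hgeo hz j i
  rw [show pdy j (pdx i (sq F)) z = pdx i (pdy j (sq F)) z from
    (pdx_pdy_comm hU hL hz j i).symm] at h1
  rw [show pdy i (pdx j (sq F)) z = pdx j (pdy i (sq F)) z from
    (pdx_pdy_comm hU hL hz i j).symm] at h2
  have hsplit1 : ∑ k, (pdy j (GF k) z * pdy k (pdy i (sq F)) z
        + GF k z * pdy j (pdy k (pdy i (sq F))) z)
      = (∑ k, pdy j (GF k) z * pdy k (pdy i (sq F)) z)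
        + ∑ k, GF k z * pdy j (pdy k (pdy i (sq F))) z := Finset.sum_add_distrib
  have hsplit2 : ∑ k, (pdy i (GF k) z * pdy k (pdy j (sq F)) z
        + GF k z * pdy i (pdy k (pdy j (sq F))) z)
      = (∑ k, pdy i (GF k) z * pdy k (pdy j (sq F)) z)
        + ∑ k, GF k z * pdy i (pdy k (pdy j (sq F))) z := Finset.sum_add_distrib
  have hP : ∑ k, z.2 k * pdy i (pdx k (pdy j (sq F))) z
      = ∑ k, z.2 k * pdy j (pdx k (pdy i (sq F))) z := by
    refine Finset.sum_congr rfl fun k _ => ?_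
    rw [S1gen hU hFs hL hz i j k]
  have hR : ∑ k, GF k z * pdy i (pdy k (pdy j (sq F))) z
      = ∑ k, GF k z * pdy j (pdy k (pdy i (sq F))) z := by
    refine Finset.sum_congr rfl fun k _ => ?_
    rw [S2gen hU hFs hL hz i j k]
  rw [hsplit1] at h1
  rw [hsplit2, hP, hR] at h2
  linarith

include hFpos hFh hGFs hgeo in
theorem Asym {z : E n} (hz : z ∈ Dom U) (i j : Fin n) :
    pdx j (pdy i F) z - ∑ k, Nc GF k j z * pdy k (pdy i F) z
      = pdx i (pdy j F) z - ∑ k, Nc GF k i z * pdy k (pdy j F) z := by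
  have h2F : (2 : ℝ) * F z ≠ 0 := by
    have := hFpos z hz; positivity
  have hexp : ∀ i j : Fin n,
      pdx j (pdy i (sq F)) z - ∑ k, pdy j (GF k) z * pdy k (pdy i (sq F)) z
        = 2 * F z * (pdx j (pdy i F) z - ∑ k, Nc GF k j z * pdy k (pdy i F) z) := by
    intro i j
    have hsum : ∑ k, pdy j (GF k) z * pdy k (pdy i (sq F)) z
        = 2 * pdy i F z * (∑ k, pdy j (GF k) z * pdy k F z)
          + 2 * F z * ∑ k, pdy j (GF k) z * pdy k (pdy i F) z := by
      rw [show (∑ k, pdy j (GF k) z * pdy k (pdy i (sq F)) z)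
          = ∑ k, pdy j (GF k) z * (2 * (pdy k F z * pdy i F z + F z * pdy k (pdy i F) z))
        from Finset.sum_congr rfl fun k _ => by rw [pdy_pdy_sq hU hFs hz i k]]
      exact split_sum _ _
    have hdel := delxF hU hFs hFpos hFh hGFs hgeo hz j
    simp only [Nc] at hdel ⊢
    rw [pdx_pdy_sq hU hFs hz i j, hsum]
    linear_combination (2 * pdy i F z) * hdel
  have hB := Bsym hU hFs hGFs hgeo hz i j
  rw [hexp i j, hexp j i] at hB
  exact mul_left_cancel₀ h2F hB

include hFpos hFh hGFs hgeo in
theorem geoI6 {z : E n} (hz : z ∈ Dom U) (i : Fin n) :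
    (∑ k, z.2 k * pdx k (pdy i F) z) - 2 * ∑ k, GF k z * pdy k (pdy i F) z
      = pdx i F z := by
  have h2F : (2 : ℝ) * F z ≠ 0 := by
    have := hFpos z hz; positivity
  have hQ : ∑ k, z.2 k * pdx k F z = 2 * ∑ k, GF k z * pdy k F z := by
    have h1 := geoI1 hU hFs hFh hGFs hgeo hz
    have e1 : ∑ k, z.2 k * pdx k (sq F) z = 2 * F z * ∑ k, z.2 k * pdx k F z := by
      rw [Finset.mul_sum]
      refine Finset.sum_congr rfl fun k _ => ?_
      rw [pdx_sq hU hFs hz k]; ring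
    have e2 : ∑ k, GF k z * pdy k (sq F) z = 2 * F z * ∑ k, GF k z * pdy k F z := by
      rw [Finset.mul_sum]
      refine Finset.sum_congr rfl fun k _ => ?_
      rw [pdy_sq hU hFs hz k]; ring
    rw [e1, e2] at h1
    refine mul_left_cancel₀ h2F ?_
    linarith
  have hg := hgeo z hz i
  have e3 : ∑ k, z.2 k * pdx k (pdy i (sq F)) z
      = 2 * pdy i F z * (∑ k, z.2 k * pdx k F z)
        + 2 * F z * ∑ k, z.2 k * pdx k (pdy i F) z := by
    rw [show (∑ k, z.2 k * pdx k (pdy i (sq F)) z)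
        = ∑ k, z.2 k * (2 * (pdx k F z * pdy i F z + F z * pdx k (pdy i F) z))
      from Finset.sum_congr rfl fun k _ => by rw [pdx_pdy_sq hU hFs hz i k]]
    exact split_sum _ _
  have e4 : ∑ k, GF k z * pdy k (pdy i (sq F)) z
      = 2 * pdy i F z * (∑ k, GF k z * pdy k F z)
        + 2 * F z * ∑ k, GF k z * pdy k (pdy i F) z := by
    rw [show (∑ k, GF k z * pdy k (pdy i (sq F)) z)
        = ∑ k, GF k z * (2 * (pdy k F z * pdy i F z + F z * pdy k (pdy i F) z))
      from Finset.sum_congr rfl fun k _ => by rw [pdy_pdy_sq hU hFs hz i k]]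
    exact split_sum _ _
  rw [e3, e4, pdx_sq hU hFs hz i] at hg
  have key : 2 * F z * ((∑ k, z.2 k * pdx k (pdy i F) z)
      - 2 * (∑ k, GF k z * pdy k (pdy i F) z) - pdx i F z) = 0 := by
    linear_combination hg - 2 * pdy i F z * hQ
  have := (mul_eq_zero.mp key).resolve_left h2F
  linarith

end Geodesic

end Finsler

section RankLemma

open Matrix

/-- Injectivity of the metric tensor from full rank. -/
theorem inj_of_rank_eq {g : Matrix (Fin n) (Fin n) ℝ} (hg : g.rank = n) :
    Function.Injective g.mulVecLin := by
  have hfr : Module.finrank ℝ (LinearMap.range g.mulVecLin)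
      = Module.finrank ℝ (Fin n → ℝ) := by
    rw [Module.finrank_fintype_fun_eq_card, Fintype.card_fin]
    exact hg
  have htop : LinearMap.range g.mulVecLin = ⊤ :=
    Submodule.eq_top_of_finrank_eq hfr
  exact LinearMap.injective_iff_surjective.mpr (LinearMap.range_eq_top.mp htop)

theorem rank_aux {n : ℕ} (A H : Matrix (Fin n) (Fin n) ℝ) (th y GFv : Fin n → ℝ)
    (Fz : ℝ) (hF : Fz ≠ 0) (hy : y ≠ 0)
    (hHy : H.mulVec y = 0)
    (hty : ∑ j, th j * y j = Fz)
    (hg : (Matrix.of fun i j => th i * th j + Fz * H i j).rank = n)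
    (hAy : A.mulVec y = (-2 : ℝ) • (H.mulVec GFv)) :
    (Matrix.fromBlocks A (-H) H 0).rank = 2 * n - 2 := by
  classical
  set g : Matrix (Fin n) (Fin n) ℝ := Matrix.of fun i j => th i * th j + Fz * H i j with hgdef
  have hginj : Function.Injective g.mulVecLin := inj_of_rank_eq hg
  -- g y = Fz • th
  have hgv : ∀ u : Fin n → ℝ, g.mulVec u = (∑ j, th j * u j) • th + Fz • (H.mulVec u) := by
    intro u
    funext i
    simp only [Matrix.mulVec, dotProduct, hgdef, Matrix.of_apply, Pi.add_apply,
      Pi.smul_apply, smul_eq_mul]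
    rw [Finset.sum_congr rfl (fun j _ => show (th i * th j + Fz * H i j) * u j
        = th i * (th j * u j) + Fz * (H i j * u j) by ring), Finset.sum_add_distrib,
      ← Finset.mul_sum, ← Finset.mul_sum]
    ring
  -- kernel of H is spanned by y
  have hker : ∀ u : Fin n → ℝ, H.mulVec u = 0 → ∃ c : ℝ, u = c • y := by
    intro u hu
    refine ⟨(∑ j, th j * u j) / Fz, ?_⟩
    have h1 : g.mulVec u = (∑ j, th j * u j) • th := by
      rw [hgv u, hu]; simp
    have hgy : g.mulVec y = Fz • th := by
      rw [hgv y, hty, hHy]; simp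
    have h2 : g.mulVec (((∑ j, th j * u j) / Fz) • y) = (∑ j, th j * u j) • th := by
      rw [Matrix.mulVec_smul, hgy, smul_smul, div_mul_cancel₀ _ hF]
    exact hginj (show g.mulVecLin u = g.mulVecLin _ from by
      simpa only [Matrix.mulVecLin_apply] using h1.trans h2.symm)
  set M := Matrix.fromBlocks A (-H) H (0 : Matrix (Fin n) (Fin n) ℝ) with hMdef
  have hn : 0 < n := by
    rcases Nat.eq_zero_or_pos n with h0 | h
    · subst h0; exact absurd (funext fun i => i.elim0) hy
    · exact h
  set w₁ : (Fin n ⊕ Fin n) → ℝ := Sum.elim y ((-2 : ℝ) • GFv) with hw1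
  set w₂ : (Fin n ⊕ Fin n) → ℝ := Sum.elim 0 y with hw2
  have hMw : ∀ x : (Fin n ⊕ Fin n) → ℝ, M.mulVec x
      = Sum.elim (A.mulVec (x ∘ Sum.inl) - H.mulVec (x ∘ Sum.inr))
        (H.mulVec (x ∘ Sum.inl)) := by
    intro x
    rw [hMdef, Matrix.fromBlocks_mulVec, Matrix.neg_mulVec, Matrix.zero_mulVec, add_zero,
      ← sub_eq_add_neg]
  have hker1 : M.mulVec w₁ = 0 := by
    rw [hMw]
    funext p
    cases p with
    | inl i =>
      have : (A.mulVec y - H.mulVec ((-2 : ℝ) • GFv)) i = 0 := by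
        rw [Matrix.mulVec_smul, hAy]
        simp
      simpa [hw1] using this
    | inr i => simpa [hw1] using congrFun hHy i
  have hker2 : M.mulVec w₂ = 0 := by
    rw [hMw]
    funext p
    cases p with
    | inl i =>
      have : (A.mulVec (0 : Fin n → ℝ) - H.mulVec y) i = 0 := by
        rw [Matrix.mulVec_zero, hHy]; simp
      simpa [hw2] using this
    | inr i => simp [hw2, Matrix.mulVec_zero]
  have hkerM : LinearMap.ker M.mulVecLin = Submodule.span ℝ {w₁, w₂} := by
    apply le_antisymm
    · intro x hx
      have hx0 : M.mulVec x = 0 := by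
        simpa only [Matrix.mulVecLin_apply] using LinearMap.mem_ker.mp hx
      rw [hMw] at hx0
      have hHu : H.mulVec (x ∘ Sum.inl) = 0 := funext fun i => congrFun hx0 (Sum.inr i)
      have hAu : A.mulVec (x ∘ Sum.inl) = H.mulVec (x ∘ Sum.inr) := by
        funext i
        have := congrFun hx0 (Sum.inl i)
        simp only [Sum.elim_inl, Pi.sub_apply, Pi.zero_apply] at this
        linarith
      obtain ⟨s, hs⟩ := hker _ hHu
      have hv : H.mulVec (x ∘ Sum.inr + (2 * s) • GFv) = 0 := by
        rw [Matrix.mulVec_add, Matrix.mulVec_smul, ← hAu, hs, Matrix.mulVec_smul, hAy]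
        funext i
        simp only [Pi.add_apply, Pi.smul_apply, smul_eq_mul, Pi.zero_apply]
        ring
      obtain ⟨t, ht⟩ := hker _ hv
      have hxe : x = s • w₁ + t • w₂ := by
        funext p
        cases p with
        | inl i =>
          have h1 : x (Sum.inl i) = s * y i := by
            have := congrFun hs i
            simpa using this
          simp [hw1, hw2, h1]
        | inr i =>
          have h2 : x (Sum.inr i) + 2 * s * GFv i = t * y i := by
            have := congrFun ht i
            simpa using this
          simp only [hw1, hw2, Pi.add_apply, Pi.smul_apply, Sum.elim_inr, smul_eq_mul]
          ring_nf
          linarith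
      rw [hxe]
      exact Submodule.add_mem _
        (Submodule.smul_mem _ _ (Submodule.subset_span (Set.mem_insert _ _)))
        (Submodule.smul_mem _ _ (Submodule.subset_span (Set.mem_insert_of_mem _ rfl)))
    · rw [Submodule.span_le]
      rintro v hv
      rcases hv with rfl | rfl
      · exact LinearMap.mem_ker.mpr (by simpa only [Matrix.mulVecLin_apply] using hker1)
      · exact LinearMap.mem_ker.mpr (by simpa only [Matrix.mulVecLin_apply] using hker2)
  have hw2ne : w₂ ≠ 0 := by
    intro h
    exact hy (funext fun i => congrFun h (Sum.inr i))
  have hLI : LinearIndependent ℝ ![w₁, w₂] := by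
    rw [linearIndependent_fin2]
    constructor
    · simpa using hw2ne
    · intro a h
      apply hy
      funext i
      have := congrFun h (Sum.inl i)
      simpa [hw1, hw2] using this.symm
  have hrange : Set.range ![w₁, w₂] = {w₁, w₂} := by
    ext v
    simp [Fin.exists_fin_two, or_comm, eq_comm]
  have hfk : Module.finrank ℝ (LinearMap.ker M.mulVecLin) = 2 := by
    rw [hkerM, ← hrange, finrank_span_eq_card hLI]
    simp
  have hrn := LinearMap.finrank_range_add_finrank_ker M.mulVecLin
  rw [hfk, Module.finrank_fintype_fun_eq_card] at hrn
  simp only [Fintype.card_sum, Fintype.card_fin] at hrn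
  have hrank : M.rank = Module.finrank ℝ (LinearMap.range M.mulVecLin) := rfl
  omega

end RankLemma




/-- Necessity part of the projective metrizability theorem: if a spray `G` is
projectively metrizable via the Finsler function `F` (with geodesic
coefficients `GF` and projective factor `P`), then `θᵢ = ∂F/∂yⁱ` satisfies the
algebraic conditions (A1), (A2) and the differential conditions (D1)–(D3). -/
theorem projective_metrizability_necessity {n : ℕ}
    (U : Set (Fin n → ℝ)) (hU : IsOpen U)
    (G GF : Fin n → E n → ℝ) (F P : E n → ℝ)
    (hG : IsSpray U G)
    (hF : IsFinsler U F)
    (hGF : IsGeodesicCoeffs U F GF)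
    (hP : ContDiffOn ℝ (⊤ : ℕ∞) P (Dom U))
    (hPh : PosHomog1 U P)
    (hproj : ∀ z ∈ Dom U, ∀ i, G i z = GF i z + P z * z.2 i) :
    ∀ z ∈ Dom U,
      ((∑ i, z.2 i * pdy i F z) = F z ∧ 0 < F z) ∧
      (dthetaMat (fun i => pdy i F) z).rank = 2 * n - 2 ∧
      (∀ i, (∑ j, z.2 j * pdy j (pdy i F) z) = 0) ∧
      (∀ i j, pdy j (pdy i F) z = pdy i (pdy j F) z) ∧
      (∀ i j, delx G j (pdy i F) z = delx G i (pdy j F) z) := by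
  obtain ⟨hFc, hFsm, hFpos, hF0, hFhom, hgrank⟩ := hF
  obtain ⟨hGFsm, hgeo⟩ := hGF
  have hFs : Sm U F := hFsm.of_le (by simp)
  have hGFs : ∀ k, Sm U (GF k) := fun k => (hGFsm k).of_le (by simp)
  have hPs : Sm U P := hP.of_le (by simp)
  have hFh : Hg U 1 F := fun w hw L hL => by
    rw [pow_one]; exact hFhom w.1 hw.1 w.2 L hL
  intro z hz
  have hd2 : ∀ i j, pdy j (pdy i F) z = pdy i (pdy j F) z := fun i j =>
    pdy_pdy_comm hU hFs hz j i
  have hd1 : ∀ i, (∑ j, z.2 j * pdy j (pdy i F) z) = 0 := fun i =>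
    eulerTheta hU hFs hFh hz i
  refine ⟨⟨eulerF hU hFh hz (smDiff hU hFs hz), hFpos z hz⟩, ?_, hd1, hd2, ?_⟩
  · -- rank condition
    set th : Fin n → ℝ := fun i => pdy i F z with hth
    set H : Matrix (Fin n) (Fin n) ℝ := Matrix.of fun i j => pdy i (pdy j F) z with hH
    set A : Matrix (Fin n) (Fin n) ℝ :=
      Matrix.of fun i j => pdx i (pdy j F) z - pdx j (pdy i F) z with hA
    have hMeq : dthetaMat (fun i => pdy i F) z = Matrix.fromBlocks A (-H) H 0 := by
      ext p q
      rcases p with i | i <;> rcases q with j | j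
      · rfl
      · show -(pdy j (pdy i F) z) = (-H) i j
        simp only [Matrix.neg_apply, hH, Matrix.of_apply, neg_inj]
        exact hd2 i j
      · rfl
      · rfl
    have hHy : H.mulVec z.2 = 0 := by
      funext i
      have : ∑ j, pdy i (pdy j F) z * z.2 j = 0 := by
        rw [show (∑ j, pdy i (pdy j F) z * z.2 j) = ∑ j, z.2 j * pdy j (pdy i F) z from
          Finset.sum_congr rfl fun j _ => by rw [← hd2 i j]; ring]
        exact hd1 i
      simpa [Matrix.mulVec, dotProduct, hH] using this
    have hty : ∑ j, th j * z.2 j = F z := by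
      rw [show (∑ j, th j * z.2 j) = ∑ j, z.2 j * pdy j F z from
        Finset.sum_congr rfl fun j _ => by rw [hth]; ring]
      exact eulerF hU hFh hz (smDiff hU hFs hz)
    have hgm : (Matrix.of fun i j => th i * th j + F z * H i j).rank = n := by
      have heq : (Matrix.of fun i j => th i * th j + F z * H i j)
          = Matrix.of (fun i j : Fin n => (1 / 2 : ℝ) * pdy i (pdy j (sq F)) z) := by
        funext i j
        simp only [Matrix.of_apply, hth, hH]
        rw [half_pdy_pdy_sq hU hFs hz i j]
      rw [heq]
      exact hgrank z hz
    have hAy : A.mulVec z.2 = (-2 : ℝ) • (H.mulVec fun k => GF k z) := by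
      funext i
      have e1 : ∑ j, z.2 j * pdx i (pdy j F) z = pdx i F z := by
        rw [show (∑ j, z.2 j * pdx i (pdy j F) z) = ∑ j, z.2 j * pdy j (pdx i F) z from
          Finset.sum_congr rfl fun j _ => by rw [pdx_pdy_comm hU hFs hz j i]]
        exact eulerFx hU hFs hFh hz i
      have e2 := geoI6 hU hFs hFpos hFh hGFs hgeo hz i
      have e3 : (A.mulVec z.2) i
          = (∑ j, z.2 j * pdx i (pdy j F) z) - ∑ j, z.2 j * pdx j (pdy i F) z := by
        simp only [Matrix.mulVec, dotProduct, hA, Matrix.of_apply, sub_mul,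
          Finset.sum_sub_distrib]
        congr 1 <;> exact Finset.sum_congr rfl fun j _ => by ring
      have e4 : ((-2 : ℝ) • (H.mulVec fun k => GF k z)) i
          = -2 * ∑ k, GF k z * pdy k (pdy i F) z := by
        simp only [Pi.smul_apply, smul_eq_mul, Matrix.mulVec, dotProduct, hH,
          Matrix.of_apply]
        rw [show (∑ k, pdy i (pdy k F) z * GF k z) = ∑ k, GF k z * pdy k (pdy i F) z from
          Finset.sum_congr rfl fun k _ => by rw [← hd2 i k]; ring]
      rw [e3, e4, e1]
      linarith
    rw [hMeq]
    exact rank_aux A H th z.2 (fun k => GF k z) (F z) (hFpos z hz).ne' hz.2 hHy hty hgm hAy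
  · -- D3
    intro i j
    have hNc : ∀ k l : Fin n, Nc G k l z
        = Nc GF k l z + pdy l P z * z.2 k + P z * (Pi.single l 1 : Fin n → ℝ) k := by
      intro k l
      have hcong : Nc G k l z = pdy l (fun w => GF k w + P w * w.2 k) z :=
        pdy_congr hU hz (fun w hw => hproj w hw k) l
      have hcd : DifferentiableAt ℝ (fun w : E n => w.2 k) z :=
        ((ContinuousLinearMap.proj k).comp
          (ContinuousLinearMap.snd ℝ (Fin n → ℝ) (Fin n → ℝ))).differentiableAt
      have hadd : pdy l (fun w => GF k w + P w * w.2 k) z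
          = pdy l (GF k) z + fderiv ℝ (fun w : E n => P w * w.2 k) z
              ((0 : Fin n → ℝ), Pi.single l 1) :=
        fd_add (smDiff hU (hGFs k) hz) ((smDiff hU hPs hz).mul hcd) _
      have hmul : fderiv ℝ (fun w : E n => P w * w.2 k) z ((0 : Fin n → ℝ), Pi.single l 1)
          = pdy l P z * z.2 k + P z * (Pi.single l 1 : Fin n → ℝ) k := by
        rw [fd_mul (smDiff hU hPs hz) hcd, fd_coord2, fd_pdy]
      rw [hcong, hadd, hmul, Nc]
      ring
    have hdelx : ∀ i j : Fin n, delx G j (pdy i F) z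
        = (pdx j (pdy i F) z - ∑ k, Nc GF k j z * pdy k (pdy i F) z)
          - P z * pdy j (pdy i F) z := by
      intro i j
      have hsum : ∑ k, Nc G k j z * pdy k (pdy i F) z
          = (∑ k, Nc GF k j z * pdy k (pdy i F) z)
            + pdy j P z * (∑ k, z.2 k * pdy k (pdy i F) z)
            + P z * ∑ k, (Pi.single j 1 : Fin n → ℝ) k * pdy k (pdy i F) z := by
        rw [Finset.mul_sum, Finset.mul_sum, ← Finset.sum_add_distrib, ← Finset.sum_add_distrib]
        refine Finset.sum_congr rfl fun k _ => ?_
        rw [hNc k j]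
        ring
      have hsingle : ∑ k, (Pi.single j 1 : Fin n → ℝ) k * pdy k (pdy i F) z
          = pdy j (pdy i F) z := by
        simp [Pi.single_apply, ite_mul, Finset.sum_ite_eq, Finset.sum_ite_eq']
      rw [delx, hsum, hsingle, hd1 i]
      ring
    rw [hdelx i j, hdelx j i, Asym hU hFs hFpos hFh hGFs hgeo hz i j, hd2 i j, hd2 j i]

end PM
end

section
/- Let Gⁱ be a spray on U that is projectively metrizable by a Finsler function F (i.e., Gⁱ = G_Fⁱ + P yⁱ for geodesic coefficients G_Fⁱ of F and a smooth positively 1-homogeneous P). Then the angular metric hᵢⱼ = F ∂²F/∂yⁱ∂yʲ of F and the curvature tensor Rᵏⱼₗ of the spray G satisfy the algebraic Bianchi-type identity hᵢₖ Rᵏⱼₗ + hₗₖ Rᵏᵢⱼ + hⱼₖ Rᵏₗᵢ = 0 at every point of U × (ℝⁿ∖{0}). -/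
namespace PM

/-- The angular metric `hᵢⱼ = F ∂²F/∂yⁱ∂yʲ`. -/
noncomputable def angular {n : ℕ} (F : E n → ℝ) (i j : Fin n) (z : E n) : ℝ :=
  F z * pdy i (pdy j F) z

/-! ### directional derivative infrastructure -/

noncomputable def pd {n : ℕ} (v : E n) (f : E n → ℝ) (z : E n) : ℝ := fderiv ℝ f z v

def vx {n : ℕ} (i : Fin n) : E n := (Pi.single i 1, 0)
def vy {n : ℕ} (i : Fin n) : E n := (0, Pi.single i 1)

lemma pdx_pd {n : ℕ} (i : Fin n) (f : E n → ℝ) : pdx i f = pd (vx i) f := rfl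
lemma pdy_pd {n : ℕ} (i : Fin n) (f : E n → ℝ) : pdy i f = pd (vy i) f := rfl

variable {n : ℕ} {Ω : Set (E n)} {f g : E n → ℝ} {z v u : E n}

lemma diffAt' {F : Type*} [NormedAddCommGroup F] [NormedSpace ℝ F] {f : E n → F}
    (hΩ : IsOpen Ω) (hf : ContDiffOn ℝ (⊤ : ℕ∞) f Ω) (hz : z ∈ Ω) :
    DifferentiableAt ℝ f z :=
  ((hf z hz).contDiffAt (hΩ.mem_nhds hz)).differentiableAt (by simp)

lemma diffAt (hΩ : IsOpen Ω) (hf : ContDiffOn ℝ (⊤ : ℕ∞) f Ω) (hz : z ∈ Ω) :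
    DifferentiableAt ℝ f z := diffAt' hΩ hf hz

lemma sm_fderiv (hΩ : IsOpen Ω) (hf : ContDiffOn ℝ (⊤ : ℕ∞) f Ω) :
    ContDiffOn ℝ (⊤ : ℕ∞) (fderiv ℝ f) Ω :=
  hf.fderiv_of_isOpen hΩ (by simp)

lemma sm_pd (hΩ : IsOpen Ω) (hf : ContDiffOn ℝ (⊤ : ℕ∞) f Ω) :
    ContDiffOn ℝ (⊤ : ℕ∞) (pd v f) Ω := by
  have h : pd v f = fun z => (ContinuousLinearMap.apply ℝ ℝ v) (fderiv ℝ f z) := rfl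
  rw [h]
  exact (ContinuousLinearMap.apply ℝ ℝ v).contDiff.comp_contDiffOn (sm_fderiv hΩ hf)

lemma pd_congr (hΩ : IsOpen Ω) (h : Set.EqOn f g Ω) (hz : z ∈ Ω) : pd v f z = pd v g z := by
  have h2 : f =ᶠ[nhds z] g := Filter.eventuallyEq_of_mem (hΩ.mem_nhds hz) h
  unfold pd; rw [h2.fderiv_eq]

lemma schwarz (hΩ : IsOpen Ω) (hf : ContDiffOn ℝ (⊤ : ℕ∞) f Ω) (hz : z ∈ Ω) :
    pd u (pd v f) z = pd v (pd u f) z := by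
  have hd : DifferentiableAt ℝ (fderiv ℝ f) z := diffAt' hΩ (sm_fderiv hΩ hf) hz
  have h1 : ∀ a b : E n, pd a (pd b f) z = fderiv ℝ (fderiv ℝ f) z a b := by
    intro a b
    show fderiv ℝ (fun y => (fderiv ℝ f y) b) z a = _
    have h2 : (fun y => (fderiv ℝ f y) b) = fun y => (fderiv ℝ f y) ((fun _ => b) y) := rfl
    rw [h2, fderiv_clm_apply hd (differentiableAt_const b)]
    simp
  rw [h1, h1]
  exact ((hf z hz).contDiffAt (hΩ.mem_nhds hz)).isSymmSndFDerivAt (by rw [minSmoothness_of_isRCLikeNormedField]; exact WithTop.coe_le_coe.mpr le_top) u v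

lemma pd_mul (hf : DifferentiableAt ℝ f z) (hg : DifferentiableAt ℝ g z) :
    pd v (fun w => f w * g w) z = pd v f z * g z + f z * pd v g z := by
  unfold pd
  rw [fderiv_fun_mul hf hg]
  simp [mul_comm]
  ring

lemma pd_sum {ι : Type*} (s : Finset ι) (A : ι → E n → ℝ)
    (h : ∀ i ∈ s, DifferentiableAt ℝ (A i) z) :
    pd v (fun w => ∑ i ∈ s, A i w) z = ∑ i ∈ s, pd v (A i) z := by
  unfold pd
  rw [fderiv_fun_sum h]
  simp

lemma pd_add (hf : DifferentiableAt ℝ f z) (hg : DifferentiableAt ℝ g z) :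
    pd v (fun w => f w + g w) z = pd v f z + pd v g z := by
  unfold pd; rw [fderiv_fun_add hf hg]; simp

lemma pd_sub (hf : DifferentiableAt ℝ f z) (hg : DifferentiableAt ℝ g z) :
    pd v (fun w => f w - g w) z = pd v f z - pd v g z := by
  unfold pd; rw [fderiv_fun_sub hf hg]; simp

lemma pd_const_mul (c : ℝ) (hf : DifferentiableAt ℝ f z) :
    pd v (fun w => c * f w) z = c * pd v f z := by
  unfold pd; rw [fderiv_const_mul hf c]; simp

noncomputable def coord2 (k : Fin n) : E n →L[ℝ] ℝ :=
  (ContinuousLinearMap.proj k).comp (ContinuousLinearMap.snd ℝ (Fin n → ℝ) (Fin n → ℝ))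

lemma diff_coord (k : Fin n) : DifferentiableAt ℝ (fun w : E n => w.2 k) z :=
  (coord2 k).differentiableAt

lemma pd_coord (k : Fin n) : pd v (fun w : E n => w.2 k) z = v.2 k := by
  have h : (fun w : E n => w.2 k) = coord2 k := rfl
  unfold pd
  rw [h, (coord2 k).fderiv]
  rfl

lemma pd_dir_eq (hf : DifferentiableAt ℝ f z) (y : Fin n → ℝ) :
    fderiv ℝ f z (0, y) = ∑ k, y k * pd (vy k) f z := by
  have h : ((0, y) : E n) = ∑ k, y k • ((vy k : E n)) := by
    apply Prod.ext <;> simp [Prod.fst_sum, Prod.snd_sum, vy]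
    · exact (Finset.univ_sum_single y).symm.trans (by
        apply Finset.sum_congr rfl; intro k _; rw [← Pi.single_smul, smul_eq_mul, mul_one])
  rw [h, map_sum]
  apply Finset.sum_congr rfl
  intro k _
  rw [map_smul]
  simp [pd, mul_comm]

lemma euler_dir {d : ℕ}
    (h : ∀ᶠ L in nhds (1:ℝ), f (z.1, L • z.2) = L ^ d * f z)
    (hf : DifferentiableAt ℝ f z) :
    ∑ k, z.2 k * pd (vy k) f z = d * f z := by
  have hγ : HasDerivAt (fun L : ℝ => ((z.1, L • z.2) : E n)) (((0 : Fin n → ℝ), z.2)) 1 := by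
    have h1 : HasDerivAt (fun L : ℝ => L • z.2) ((1:ℝ) • z.2) 1 :=
      (hasDerivAt_id 1).smul_const z.2
    simpa using HasDerivAt.prodMk (hasDerivAt_const (1:ℝ) z.1) h1
  have hze : ((z.1, (1:ℝ) • z.2) : E n) = z := by simp
  have hc : HasDerivAt (fun L : ℝ => f (z.1, L • z.2)) (fderiv ℝ f z ((0 : Fin n → ℝ), z.2)) 1 := by
    have hF : HasFDerivAt f (fderiv ℝ f z) ((fun L : ℝ => ((z.1, L • z.2) : E n)) 1) := by
      rw [show (fun L : ℝ => ((z.1, L • z.2) : E n)) 1 = z from hze]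
      exact hf.hasFDerivAt
    exact hF.comp_hasDerivAt 1 hγ
  have hc2 : HasDerivAt (fun L : ℝ => L ^ d * f z) ((d : ℝ) * f z) 1 := by
    simpa using (hasDerivAt_pow d 1).mul_const (f z)
  have hc3 : HasDerivAt (fun L : ℝ => f (z.1, L • z.2)) ((d : ℝ) * f z) 1 :=
    hc2.congr_of_eventuallyEq h
  rw [← pd_dir_eq hf]
  exact hc.unique hc3

/-- Derivative of `w ↦ ∑ k, w.2 k * g k w`. -/
lemma pd_sum_coord_mul (hΩ : IsOpen Ω) (g : Fin n → E n → ℝ)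
    (hg : ∀ k, ContDiffOn ℝ (⊤ : ℕ∞) (g k) Ω) (hz : z ∈ Ω) :
    pd v (fun w => ∑ k, w.2 k * g k w) z
      = ∑ k, (v.2 k * g k z + z.2 k * pd v (g k) z) := by
  rw [pd_sum Finset.univ _ (fun k _ => (diff_coord k).fun_mul (diffAt hΩ (hg k) hz))]
  exact Finset.sum_congr rfl fun k _ => by
    rw [pd_mul (diff_coord k) (diffAt hΩ (hg k) hz), pd_coord]

/-- Derivative of `w ↦ ∑ k, c k w * g k w`. -/
lemma pd_sum_mul (hΩ : IsOpen Ω) (c g : Fin n → E n → ℝ)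
    (hc : ∀ k, ContDiffOn ℝ (⊤ : ℕ∞) (c k) Ω) (hg : ∀ k, ContDiffOn ℝ (⊤ : ℕ∞) (g k) Ω) (hz : z ∈ Ω) :
    pd v (fun w => ∑ k, c k w * g k w) z
      = ∑ k, (pd v (c k) z * g k z + c k z * pd v (g k) z) := by
  rw [pd_sum Finset.univ _ (fun k _ => (diffAt hΩ (hc k) hz).fun_mul (diffAt hΩ (hg k) hz))]
  exact Finset.sum_congr rfl fun k _ => by
    rw [pd_mul (diffAt hΩ (hc k) hz) (diffAt hΩ (hg k) hz)]

lemma single_sum (q : Fin n → ℝ) (j : Fin n) : ∑ k, (Pi.single j 1 : Fin n → ℝ) k * q k = q j := by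
  simp [Pi.single_apply, ite_mul]

lemma alg (N : Fin n → Fin n → ℝ) (β : Fin n → ℝ)
    (xxf : Fin n → Fin n → ℝ) (XN : Fin n → Fin n → Fin n → ℝ)
    (xyf : Fin n → Fin n → ℝ) (yN : Fin n → Fin n → Fin n → ℝ)
    (yyf : Fin n → Fin n → ℝ) (i j : Fin n)
    (hxx : xxf i j = xxf j i) (hyy : ∀ a b, yyf a b = yyf b a) :
    ((xxf i j - (∑ k, (XN i k j * β k + N k j * xyf k i)))
      - ∑ m, N m i * (xyf m j - ∑ k, (yN m k j * β k + N k j * yyf m k)))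
    - ((xxf j i - (∑ k, (XN j k i * β k + N k i * xyf k j)))
      - ∑ m, N m j * (xyf m i - ∑ k, (yN m k i * β k + N k i * yyf m k)))
    = ∑ k, ((XN j k i - ∑ m, N m j * yN m k i) - (XN i k j - ∑ m, N m i * yN m k j)) * β k := by
  have h6 : (∑ m, ∑ k, N m i * (N k j * yyf m k)) = ∑ m, ∑ k, N m j * (N k i * yyf m k) := by
    rw [Finset.sum_comm]
    exact Finset.sum_congr rfl fun a _ => Finset.sum_congr rfl fun b _ => by rw [hyy b a]; ring
  have h5i : (∑ m, ∑ k, N m i * (yN m k j * β k)) = ∑ k, (∑ m, N m i * yN m k j) * β k := by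
    rw [Finset.sum_comm]
    exact Finset.sum_congr rfl fun a _ => by
      rw [Finset.sum_mul]
      exact Finset.sum_congr rfl fun b _ => by ring
  have h5j : (∑ m, ∑ k, N m j * (yN m k i * β k)) = ∑ k, (∑ m, N m j * yN m k i) * β k := by
    rw [Finset.sum_comm]
    exact Finset.sum_congr rfl fun a _ => by
      rw [Finset.sum_mul]
      exact Finset.sum_congr rfl fun b _ => by ring
  simp only [mul_sub, sub_mul, mul_add, add_mul, Finset.mul_sum, Finset.sum_sub_distrib,
    Finset.sum_add_distrib]
  linarith [h6, h5i, h5j, hxx]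

lemma pd_delx (hΩ : IsOpen Ω) {G : Fin n → E n → ℝ}
    (hG : ∀ k, ContDiffOn ℝ (⊤ : ℕ∞) (G k) Ω) (hf : ContDiffOn ℝ (⊤ : ℕ∞) f Ω) (hz : z ∈ Ω)
    (j : Fin n) (v : E n) :
    pd v (delx G j f) z
      = pd v (pd (vx j) f) z
        - ∑ k, (pd v (Nc G k j) z * pd (vy k) f z + Nc G k j z * pd v (pd (vy k) f) z) := by
  have hNc : ∀ k j, ContDiffOn ℝ (⊤ : ℕ∞) (Nc G k j) Ω := fun k j => sm_pd hΩ (hG k)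
  have h1 : delx G j f = fun w => pd (vx j) f w - ∑ k, Nc G k j w * pd (vy k) f w := rfl
  rw [h1]
  rw [pd_sub (diffAt hΩ (sm_pd hΩ hf) hz)
    (DifferentiableAt.fun_sum (fun k _ =>
      (diffAt hΩ (hNc k j) hz).fun_mul (diffAt hΩ (sm_pd hΩ hf) hz)))]
  rw [pd_sum_mul hΩ _ _ (fun k => hNc k j) (fun k => sm_pd hΩ hf) hz]

lemma comm (hΩ : IsOpen Ω) {G : Fin n → E n → ℝ}
    (hG : ∀ k, ContDiffOn ℝ (⊤ : ℕ∞) (G k) Ω) (hf : ContDiffOn ℝ (⊤ : ℕ∞) f Ω) (hz : z ∈ Ω) (i j : Fin n) :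
    delx G i (delx G j f) z - delx G j (delx G i f) z
      = ∑ k, Rcurv G k i j z * pd (vy k) f z := by
  have hexp : ∀ a b : Fin n,
      delx G a (delx G b f) z
        = ((pd (vx a) (pd (vx b) f) z
            - (∑ k, (pd (vx a) (Nc G k b) z * pd (vy k) f z
                + Nc G k b z * pd (vx a) (pd (vy k) f) z)))
          - ∑ m, Nc G m a z * (pd (vx b) (pd (vy m) f) z
              - ∑ k, (pd (vy m) (Nc G k b) z * pd (vy k) f z
                + Nc G k b z * pd (vy m) (pd (vy k) f) z))) := by
    intro a b
    show pd (vx a) (delx G b f) z - ∑ m, Nc G m a z * pd (vy m) (delx G b f) z = _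
    rw [pd_delx hΩ hG hf hz b (vx a)]
    have h2 : ∀ m : Fin n, Nc G m a z * pd (vy m) (delx G b f) z
        = Nc G m a z * (pd (vx b) (pd (vy m) f) z
            - ∑ k, (pd (vy m) (Nc G k b) z * pd (vy k) f z
              + Nc G k b z * pd (vy m) (pd (vy k) f) z)) := by
      intro m
      rw [pd_delx hΩ hG hf hz b (vy m), schwarz hΩ hf hz]
    rw [Finset.sum_congr rfl fun m _ => h2 m]
  rw [hexp i j, hexp j i]
  have key := alg (fun m a => Nc G m a z) (fun k => pd (vy k) f z)
      (fun a b => pd (vx a) (pd (vx b) f) z) (fun a k b => pd (vx a) (Nc G k b) z)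
      (fun k a => pd (vx a) (pd (vy k) f) z) (fun m k b => pd (vy m) (Nc G k b) z)
      (fun m k => pd (vy m) (pd (vy k) f) z) i j
      (schwarz hΩ hf hz)
      (fun a b => schwarz hΩ hf hz)
  have hR : ∀ k : Fin n, Rcurv G k i j z
      = ((pd (vx j) (Nc G k i) z - ∑ m, Nc G m j z * pd (vy m) (Nc G k i) z)
        - (pd (vx i) (Nc G k j) z - ∑ m, Nc G m i z * pd (vy m) (Nc G k j) z)) := fun k => rfl
  rw [show (∑ k, Rcurv G k i j z * pd (vy k) f z)
      = ∑ k, ((pd (vx j) (Nc G k i) z - ∑ m, Nc G m j z * pd (vy m) (Nc G k i) z)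
        - (pd (vx i) (Nc G k j) z - ∑ m, Nc G m i z * pd (vy m) (Nc G k j) z))
          * pd (vy k) f z from Finset.sum_congr rfl fun k _ => by rw [hR k]]
  exact key

lemma delx_congr (hΩ : IsOpen Ω) {G : Fin n → E n → ℝ} {g g' : E n → ℝ}
    (h : Set.EqOn g g' Ω) (hz : z ∈ Ω) (l : Fin n) :
    delx G l g z = delx G l g' z := by
  show pd (vx l) g z - ∑ k, Nc G k l z * pd (vy k) g z = _
  rw [pd_congr hΩ h hz]
  rw [Finset.sum_congr rfl fun k _ => by rw [pd_congr hΩ h hz (v := vy k)]]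
  rfl


/-- If a spray `G` is projectively metrizable by a Finsler function `F`, then
the angular metric of `F` and the curvature tensor of `G` satisfy the
algebraic Bianchi-type identity `hᵢₖ Rᵏⱼₗ + hₗₖ Rᵏᵢⱼ + hⱼₖ Rᵏₗᵢ = 0`. -/
theorem bianchi_identity_for_projectively_metrizable {n : ℕ}
    (U : Set (Fin n → ℝ)) (hU : IsOpen U)
    (G GF : Fin n → E n → ℝ) (F P : E n → ℝ)
    (hG : IsSpray U G)
    (hF : IsFinsler U F)
    (hGF : IsGeodesicCoeffs U F GF)
    (hP : ContDiffOn ℝ (⊤ : ℕ∞) P (Dom U))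
    (hPh : PosHomog1 U P)
    (hproj : ∀ z ∈ Dom U, ∀ i, G i z = GF i z + P z * z.2 i) :
    ∀ z ∈ Dom U, ∀ i j l,
      (∑ k, angular F i k z * Rcurv G k j l z)
        + (∑ k, angular F l k z * Rcurv G k i j z)
        + (∑ k, angular F j k z * Rcurv G k l i z) = 0 := by

  obtain ⟨-, hsmF, hFpos, -, hFhom, -⟩ := hF
  obtain ⟨hsmGF, geo⟩ := hGF
  have hsmG : ∀ i, ContDiffOn ℝ (⊤ : ℕ∞) (G i) (Dom U) := hG.1
  have hΩ : IsOpen (Dom U) := hU.prod isOpen_ne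
  simp only [pdx_pd, pdy_pd] at geo
  -- Euler identities
  have eu1 : ∀ w ∈ Dom U, (∑ k, w.2 k * pd (vy k) F w) = F w := by
    intro w hw
    have h1 : ∀ᶠ L in nhds (1:ℝ), F (w.1, L • w.2) = L ^ 1 * F w := by
      filter_upwards [eventually_gt_nhds (show (0:ℝ) < 1 by norm_num)] with L hL
      rw [pow_one, ← hFhom w.1 hw.1 w.2 L hL]
    have := euler_dir h1 (diffAt hΩ hsmF hw)
    simpa using this
  have eu2 : ∀ w ∈ Dom U, ∀ i, (∑ k, w.2 k * pd (vy i) (pd (vy k) F) w) = 0 := by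
    intro w hw i
    have hEq : Set.EqOn (fun u : E n => ∑ k, u.2 k * pd (vy k) F u) F (Dom U) :=
      fun u hu => eu1 u hu
    have h2 := pd_congr hΩ hEq hw (v := vy i)
    rw [pd_sum_coord_mul hΩ _ (fun k => sm_pd hΩ hsmF) hw, Finset.sum_add_distrib] at h2
    have h3 : ∑ k, (vy i : E n).2 k * pd (vy k) F w = pd (vy i) F w := by
      have := single_sum (fun k => pd (vy k) F w) i
      simpa [vy] using this
    linarith [h2, h3]
  have eu2' : ∀ w ∈ Dom U, ∀ i, (∑ k, w.2 k * pd (vy k) (pd (vy i) F) w) = 0 := by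
    intro w hw i
    rw [← eu2 w hw i]
    exact Finset.sum_congr rfl fun k _ => by rw [schwarz hΩ hsmF hw]
  have eu3 : ∀ w ∈ Dom U, ∀ i, (∑ k, w.2 k * pd (vx i) (pd (vy k) F) w) = pd (vx i) F w := by
    intro w hw i
    have hEq : Set.EqOn (fun u : E n => ∑ k, u.2 k * pd (vy k) F u) F (Dom U) :=
      fun u hu => eu1 u hu
    have h2 := pd_congr hΩ hEq hw (v := vx i)
    rw [pd_sum_coord_mul hΩ _ (fun k => sm_pd hΩ hsmF) hw, Finset.sum_add_distrib] at h2
    have h3 : ∑ k, (vx i : E n).2 k * pd (vy k) F w = 0 := by simp [vx]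
    linarith [h2, h3]
  -- derivatives of F²
  have psq : ∀ (v : E n), ∀ w ∈ Dom U, pd v (sq F) w = 2 * (F w * pd v F w) := by
    intro v w hw
    have hsq : sq F = fun u => F u * F u := funext fun u => by simp [sq]; ring
    rw [hsq, pd_mul (diffAt hΩ hsmF hw) (diffAt hΩ hsmF hw)]
    ring
  -- geodesic equation at the level of F
  have G4 : ∀ w ∈ Dom U, ∀ i,
      pd (vy i) F w * (∑ k, w.2 k * pd (vx k) F w)
        + F w * (∑ k, w.2 k * pd (vx k) (pd (vy i) F) w)
        - 2 * (∑ k, GF k w * pd (vy k) F w) * pd (vy i) F w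
        - 2 * F w * (∑ k, GF k w * pd (vy k) (pd (vy i) F) w)
      = F w * pd (vx i) F w := by
    intro w hw i
    have hgeo := geo w hw i
    have hEq : Set.EqOn (pd (vy i) (sq F)) (fun u => 2 * (F u * pd (vy i) F u)) (Dom U) :=
      fun u hu => psq (vy i) u hu
    have hdm : DifferentiableAt ℝ (fun u => F u * pd (vy i) F u) w :=
      (diffAt hΩ hsmF hw).mul (diffAt hΩ (sm_pd hΩ hsmF) hw)
    have hx : ∀ k : Fin n, pd (vx k) (pd (vy i) (sq F)) w
        = 2 * (pd (vx k) F w * pd (vy i) F w + F w * pd (vx k) (pd (vy i) F) w) := by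
      intro k
      rw [pd_congr hΩ hEq hw, pd_const_mul 2 hdm,
        pd_mul (diffAt hΩ hsmF hw) (diffAt hΩ (sm_pd hΩ hsmF) hw)]
    have hy : ∀ k : Fin n, pd (vy k) (pd (vy i) (sq F)) w
        = 2 * (pd (vy k) F w * pd (vy i) F w + F w * pd (vy k) (pd (vy i) F) w) := by
      intro k
      rw [pd_congr hΩ hEq hw, pd_const_mul 2 hdm,
        pd_mul (diffAt hΩ hsmF hw) (diffAt hΩ (sm_pd hΩ hsmF) hw)]
    have hxi : pd (vx i) (sq F) w = 2 * (F w * pd (vx i) F w) := psq (vx i) w hw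
    rw [Finset.sum_congr rfl (fun k _ => by rw [hx k] :
          ∀ k ∈ Finset.univ, w.2 k * pd (vx k) (pd (vy i) (sq F)) w
            = w.2 k * (2 * (pd (vx k) F w * pd (vy i) F w + F w * pd (vx k) (pd (vy i) F) w))),
        Finset.sum_congr rfl (fun k _ => by rw [hy k] :
          ∀ k ∈ Finset.univ, GF k w * pd (vy k) (pd (vy i) (sq F)) w
            = GF k w * (2 * (pd (vy k) F w * pd (vy i) F w + F w * pd (vy k) (pd (vy i) F) w))),
        hxi] at hgeo
    have e3 : ∑ k, w.2 k * (2 * (pd (vx k) F w * pd (vy i) F w + F w * pd (vx k) (pd (vy i) F) w))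
        = 2 * pd (vy i) F w * (∑ k, w.2 k * pd (vx k) F w)
          + 2 * F w * (∑ k, w.2 k * pd (vx k) (pd (vy i) F) w) := by
      rw [Finset.mul_sum, Finset.mul_sum, ← Finset.sum_add_distrib]
      exact Finset.sum_congr rfl fun k _ => by ring
    have e4 : ∑ k, GF k w * (2 * (pd (vy k) F w * pd (vy i) F w + F w * pd (vy k) (pd (vy i) F) w))
        = 2 * pd (vy i) F w * (∑ k, GF k w * pd (vy k) F w)
          + 2 * F w * (∑ k, GF k w * pd (vy k) (pd (vy i) F) w) := by
      rw [Finset.mul_sum, Finset.mul_sum, ← Finset.sum_add_distrib]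
      exact Finset.sum_congr rfl fun k _ => by ring
    rw [e3, e4] at hgeo
    linarith [hgeo]
  -- F is constant along the GF-spray: ∑ yᵏ Fₓₖ = 2 ∑ GFᵏ F_yₖ
  have SF : ∀ w ∈ Dom U, (∑ k, w.2 k * pd (vx k) F w)
      = 2 * ∑ k, GF k w * pd (vy k) F w := by
    intro w hw
    have hc : ∑ i, w.2 i * (F w * pd (vx i) F w)
        = ∑ i, w.2 i *
            (pd (vy i) F w * (∑ k, w.2 k * pd (vx k) F w)
              + F w * (∑ k, w.2 k * pd (vx k) (pd (vy i) F) w)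
              - 2 * (∑ k, GF k w * pd (vy k) F w) * pd (vy i) F w
              - 2 * F w * (∑ k, GF k w * pd (vy k) (pd (vy i) F) w)) :=
      Finset.sum_congr rfl fun i _ => by rw [G4 w hw i]
    have hL : ∑ i, w.2 i * (F w * pd (vx i) F w)
        = F w * (∑ k, w.2 k * pd (vx k) F w) := by
      rw [Finset.mul_sum]; exact Finset.sum_congr rfl fun i _ => by ring
    have hR1 : ∑ i, w.2 i * pd (vy i) F w = F w := eu1 w hw
    have hR2 : ∑ i, w.2 i * (∑ k, w.2 k * pd (vx k) (pd (vy i) F) w)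
        = ∑ k, w.2 k * pd (vx k) F w := by
      have hsw : ∑ i, w.2 i * (∑ k, w.2 k * pd (vx k) (pd (vy i) F) w)
          = ∑ k, w.2 k * (∑ i, w.2 i * pd (vx k) (pd (vy i) F) w) := by
        simp only [Finset.mul_sum]
        rw [Finset.sum_comm]
        exact Finset.sum_congr rfl fun k _ => Finset.sum_congr rfl fun i _ => by ring
      rw [hsw]
      exact Finset.sum_congr rfl fun k _ => by rw [eu3 w hw k]
    have hR3 : ∑ i, w.2 i * (∑ k, GF k w * pd (vy k) (pd (vy i) F) w) = 0 := by
      have hsw : ∑ i, w.2 i * (∑ k, GF k w * pd (vy k) (pd (vy i) F) w)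
          = ∑ k, GF k w * (∑ i, w.2 i * pd (vy k) (pd (vy i) F) w) := by
        simp only [Finset.mul_sum]
        rw [Finset.sum_comm]
        exact Finset.sum_congr rfl fun k _ => Finset.sum_congr rfl fun i _ => by ring
      rw [hsw]
      rw [Finset.sum_congr rfl (fun k _ => by rw [eu2 w hw k] :
        ∀ k ∈ Finset.univ, GF k w * (∑ i, w.2 i * pd (vy k) (pd (vy i) F) w) = GF k w * 0)]
      simp
    have hexp : ∑ i, w.2 i *
            (pd (vy i) F w * (∑ k, w.2 k * pd (vx k) F w)
              + F w * (∑ k, w.2 k * pd (vx k) (pd (vy i) F) w)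
              - 2 * (∑ k, GF k w * pd (vy k) F w) * pd (vy i) F w
              - 2 * F w * (∑ k, GF k w * pd (vy k) (pd (vy i) F) w))
        = (∑ i, w.2 i * pd (vy i) F w) * (∑ k, w.2 k * pd (vx k) F w)
          + F w * (∑ i, w.2 i * (∑ k, w.2 k * pd (vx k) (pd (vy i) F) w))
          - 2 * (∑ k, GF k w * pd (vy k) F w) * (∑ i, w.2 i * pd (vy i) F w)
          - 2 * F w * (∑ i, w.2 i * (∑ k, GF k w * pd (vy k) (pd (vy i) F) w)) := by
      rw [Finset.sum_congr rfl (fun i _ => by ring :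
        ∀ i ∈ Finset.univ, w.2 i *
            (pd (vy i) F w * (∑ k, w.2 k * pd (vx k) F w)
              + F w * (∑ k, w.2 k * pd (vx k) (pd (vy i) F) w)
              - 2 * (∑ k, GF k w * pd (vy k) F w) * pd (vy i) F w
              - 2 * F w * (∑ k, GF k w * pd (vy k) (pd (vy i) F) w))
          = (w.2 i * pd (vy i) F w) * (∑ k, w.2 k * pd (vx k) F w)
            + F w * (w.2 i * (∑ k, w.2 k * pd (vx k) (pd (vy i) F) w))
            - (2 * (∑ k, GF k w * pd (vy k) F w)) * (w.2 i * pd (vy i) F w)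
            - (2 * F w) * (w.2 i * (∑ k, GF k w * pd (vy k) (pd (vy i) F) w)))]
      simp only [Finset.sum_sub_distrib, Finset.sum_add_distrib, ← Finset.mul_sum,
        ← Finset.sum_mul]
    rw [hexp, hR1, hR2, hR3] at hc
    rw [hL] at hc
    have hFne : F w ≠ 0 := ne_of_gt (hFpos w hw)
    have hc2 : F w * (∑ k, w.2 k * pd (vx k) F w)
        = F w * (2 * ∑ k, GF k w * pd (vy k) F w) := by linarith [hc]
    exact mul_left_cancel₀ hFne hc2
  -- spray equation for the 1-form ∂F/∂yⁱ
  have G4' : ∀ w ∈ Dom U, ∀ i, (∑ k, w.2 k * pd (vx k) (pd (vy i) F) w)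
      = pd (vx i) F w + 2 * ∑ k, GF k w * pd (vy k) (pd (vy i) F) w := by
    intro w hw i
    have h := G4 w hw i
    rw [SF w hw] at h
    have hFne : F w ≠ 0 := ne_of_gt (hFpos w hw)
    have h2 : F w * (∑ k, w.2 k * pd (vx k) (pd (vy i) F) w)
        = F w * (pd (vx i) F w + 2 * ∑ k, GF k w * pd (vy k) (pd (vy i) F) w) := by
      ring_nf
      ring_nf at h
      linarith [h]
    exact mul_left_cancel₀ hFne h2
  -- differentiate the spray equation in y^b
  have key : ∀ w ∈ Dom U, ∀ a b : Fin n,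
      pd (vx b) (pd (vy a) F) w + (∑ k, w.2 k * pd (vy b) (pd (vx k) (pd (vy a) F)) w)
        = pd (vy b) (pd (vx a) F) w
          + 2 * ∑ k, (pd (vy b) (GF k) w * pd (vy k) (pd (vy a) F) w
              + GF k w * pd (vy b) (pd (vy k) (pd (vy a) F)) w) := by
    intro w hw a b
    have hEq : Set.EqOn (fun u : E n => ∑ k, u.2 k * pd (vx k) (pd (vy a) F) u)
        (fun u => pd (vx a) F u + 2 * ∑ k, GF k u * pd (vy k) (pd (vy a) F) u) (Dom U) :=
      fun u hu => G4' u hu a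
    have hdl := pd_congr hΩ hEq hw (v := vy b)
    rw [pd_sum_coord_mul hΩ _ (fun k => sm_pd hΩ (sm_pd hΩ hsmF)) hw,
      Finset.sum_add_distrib] at hdl
    have h3 : ∑ k, (vy b : E n).2 k * pd (vx k) (pd (vy a) F) w
        = pd (vx b) (pd (vy a) F) w := by
      have := single_sum (fun k => pd (vx k) (pd (vy a) F) w) b
      simpa [vy] using this
    have hdsum : DifferentiableAt ℝ
        (fun u : E n => ∑ k, GF k u * pd (vy k) (pd (vy a) F) u) w :=
      DifferentiableAt.fun_sum fun k _ =>
        (diffAt hΩ (hsmGF k) hw).fun_mul (diffAt hΩ (sm_pd hΩ (sm_pd hΩ hsmF)) hw)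
    rw [pd_add (diffAt hΩ (sm_pd hΩ hsmF) hw) (hdsum.const_mul 2),
      pd_const_mul 2 hdsum,
      pd_sum_mul hΩ _ _ (fun k => hsmGF k) (fun k => sm_pd hΩ (sm_pd hΩ hsmF)) hw,
      h3] at hdl
    linarith [hdl]
  -- closedness of the Hilbert form along the GF-connection
  have BB : ∀ w ∈ Dom U, ∀ i j : Fin n,
      pd (vx j) (pd (vy i) F) w - pd (vx i) (pd (vy j) F) w
        = (∑ k, pd (vy j) (GF k) w * pd (vy k) (pd (vy i) F) w)
          - ∑ k, pd (vy i) (GF k) w * pd (vy k) (pd (vy j) F) w := by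
    intro w hw i j
    have k1 := key w hw i j
    have k2 := key w hw j i
    rw [Finset.sum_add_distrib] at k1 k2
    have hT : (∑ k, w.2 k * pd (vy j) (pd (vx k) (pd (vy i) F)) w)
        = ∑ k, w.2 k * pd (vy i) (pd (vx k) (pd (vy j) F)) w :=
      Finset.sum_congr rfl fun k _ => by
        rw [show pd (vy j) (pd (vx k) (pd (vy i) F)) w
            = pd (vy i) (pd (vx k) (pd (vy j) F)) w from by
          calc pd (vy j) (pd (vx k) (pd (vy i) F)) w
              = pd (vx k) (pd (vy j) (pd (vy i) F)) w := schwarz hΩ (sm_pd hΩ hsmF) hw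
            _ = pd (vx k) (pd (vy i) (pd (vy j) F)) w :=
                pd_congr hΩ (fun u hu => schwarz hΩ hsmF hu) hw
            _ = pd (vy i) (pd (vx k) (pd (vy j) F)) w :=
                (schwarz hΩ (sm_pd hΩ hsmF) hw).symm]
    have hUs : (∑ k, GF k w * pd (vy j) (pd (vy k) (pd (vy i) F)) w)
        = ∑ k, GF k w * pd (vy i) (pd (vy k) (pd (vy j) F)) w :=
      Finset.sum_congr rfl fun k _ => by
        rw [show pd (vy j) (pd (vy k) (pd (vy i) F)) w
            = pd (vy i) (pd (vy k) (pd (vy j) F)) w from by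
          calc pd (vy j) (pd (vy k) (pd (vy i) F)) w
              = pd (vy k) (pd (vy j) (pd (vy i) F)) w := schwarz hΩ (sm_pd hΩ hsmF) hw
            _ = pd (vy k) (pd (vy i) (pd (vy j) F)) w :=
                pd_congr hΩ (fun u hu => schwarz hΩ hsmF hu) hw
            _ = pd (vy i) (pd (vy k) (pd (vy j) F)) w :=
                (schwarz hΩ (sm_pd hΩ hsmF) hw).symm]
    have hs1 : pd (vy j) (pd (vx i) F) w = pd (vx i) (pd (vy j) F) w := schwarz hΩ hsmF hw
    have hs2 : pd (vy i) (pd (vx j) F) w = pd (vx j) (pd (vy i) F) w := schwarz hΩ hsmF hw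
    linarith [k1, k2, hT, hUs, hs1, hs2]
  -- nonlinear connection of G versus GF
  have NcExp : ∀ w ∈ Dom U, ∀ k j : Fin n,
      Nc G k j w = pd (vy j) (GF k) w
        + (pd (vy j) P w * w.2 k + P w * (Pi.single j 1 : Fin n → ℝ) k) := by
    intro w hw k j
    have hEq : Set.EqOn (G k) (fun u => GF k u + P u * u.2 k) (Dom U) :=
      fun u hu => hproj u hu k
    show pd (vy j) (G k) w = _
    rw [pd_congr hΩ hEq hw,
      pd_add (diffAt hΩ (hsmGF k) hw) ((diffAt hΩ hP hw).fun_mul (diff_coord k)),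
      pd_mul (diffAt hΩ hP hw) (diff_coord k), pd_coord]
    rfl
  -- the Hilbert form is closed for the horizontal distribution of G
  have Bvan : ∀ w ∈ Dom U, ∀ i j : Fin n,
      delx G j (pd (vy i) F) w = delx G i (pd (vy j) F) w := by
    intro w hw i j
    show pd (vx j) (pd (vy i) F) w - ∑ k, Nc G k j w * pd (vy k) (pd (vy i) F) w
      = pd (vx i) (pd (vy j) F) w - ∑ k, Nc G k i w * pd (vy k) (pd (vy j) F) w
    have hN : ∀ (a b : Fin n),
        (∑ k, Nc G k b w * pd (vy k) (pd (vy a) F) w)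
          = (∑ k, pd (vy b) (GF k) w * pd (vy k) (pd (vy a) F) w)
            + P w * pd (vy b) (pd (vy a) F) w := by
      intro a b
      have h1 : ∀ k ∈ Finset.univ, Nc G k b w * pd (vy k) (pd (vy a) F) w
          = pd (vy b) (GF k) w * pd (vy k) (pd (vy a) F) w
            + pd (vy b) P w * (w.2 k * pd (vy k) (pd (vy a) F) w)
            + P w * ((Pi.single b 1 : Fin n → ℝ) k * pd (vy k) (pd (vy a) F) w) := by
        intro k _
        rw [NcExp w hw k b]
        ring
      rw [Finset.sum_congr rfl h1, Finset.sum_add_distrib, Finset.sum_add_distrib,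
        ← Finset.mul_sum, ← Finset.mul_sum, eu2' w hw a,
        single_sum (fun k => pd (vy k) (pd (vy a) F) w) b]
      ring
    rw [hN i j, hN j i]
    have hb : pd (vy j) (pd (vy i) F) w = pd (vy i) (pd (vy j) F) w := schwarz hΩ hsmF hw
    have hb2 : P w * pd (vy j) (pd (vy i) F) w = P w * pd (vy i) (pd (vy j) F) w := by rw [hb]
    have := BB w hw i j
    linarith [this, hb2]
  -- final assembly
  intro z hz i j l
  have hsmθ : ∀ a : Fin n, ContDiffOn ℝ (⊤ : ℕ∞) (pd (vy a) F) (Dom U) := fun a => sm_pd hΩ hsmF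
  have C1 := comm hΩ hsmG (hsmθ i) hz l j
  have C2 := comm hΩ hsmG (hsmθ l) hz j i
  have C3 := comm hΩ hsmG (hsmθ j) hz i l
  have E1 : delx G l (delx G j (pd (vy i) F)) z = delx G l (delx G i (pd (vy j) F)) z :=
    delx_congr hΩ (fun w hw => Bvan w hw i j) hz l
  have E2 : delx G j (delx G i (pd (vy l) F)) z = delx G j (delx G l (pd (vy i) F)) z :=
    delx_congr hΩ (fun w hw => Bvan w hw l i) hz j
  have E3 : delx G i (delx G l (pd (vy j) F)) z = delx G i (delx G j (pd (vy l) F)) z :=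
    delx_congr hΩ (fun w hw => Bvan w hw j l) hz i
  have hcomb : (∑ k, Rcurv G k l j z * pd (vy k) (pd (vy i) F) z)
      + (∑ k, Rcurv G k j i z * pd (vy k) (pd (vy l) F) z)
      + (∑ k, Rcurv G k i l z * pd (vy k) (pd (vy j) F) z) = 0 := by
    linarith [C1, C2, C3, E1, E2, E3]
  have t1 : (∑ k, angular F i k z * Rcurv G k j l z)
      = -(F z * ∑ k, Rcurv G k l j z * pd (vy k) (pd (vy i) F) z) := by
    have h1 : ∀ k ∈ Finset.univ, angular F i k z * Rcurv G k j l z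
        = -(F z * (Rcurv G k l j z * pd (vy k) (pd (vy i) F) z)) := by
      intro k _
      have hr : Rcurv G k l j z = -Rcurv G k j l z := by
        show delx G j (Nc G k l) z - delx G l (Nc G k j) z
          = -(delx G l (Nc G k j) z - delx G j (Nc G k l) z)
        ring
      have hb : pd (vy i) (pd (vy k) F) z = pd (vy k) (pd (vy i) F) z := schwarz hΩ hsmF hz
      show F z * pd (vy i) (pd (vy k) F) z * Rcurv G k j l z = _
      rw [hr, hb]; ring
    rw [Finset.sum_congr rfl h1, Finset.sum_neg_distrib, ← Finset.mul_sum]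
  have t2 : (∑ k, angular F l k z * Rcurv G k i j z)
      = -(F z * ∑ k, Rcurv G k j i z * pd (vy k) (pd (vy l) F) z) := by
    have h1 : ∀ k ∈ Finset.univ, angular F l k z * Rcurv G k i j z
        = -(F z * (Rcurv G k j i z * pd (vy k) (pd (vy l) F) z)) := by
      intro k _
      have hr : Rcurv G k j i z = -Rcurv G k i j z := by
        show delx G i (Nc G k j) z - delx G j (Nc G k i) z
          = -(delx G j (Nc G k i) z - delx G i (Nc G k j) z)
        ring
      have hb : pd (vy l) (pd (vy k) F) z = pd (vy k) (pd (vy l) F) z := schwarz hΩ hsmF hz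
      show F z * pd (vy l) (pd (vy k) F) z * Rcurv G k i j z = _
      rw [hr, hb]; ring
    rw [Finset.sum_congr rfl h1, Finset.sum_neg_distrib, ← Finset.mul_sum]
  have t3 : (∑ k, angular F j k z * Rcurv G k l i z)
      = -(F z * ∑ k, Rcurv G k i l z * pd (vy k) (pd (vy j) F) z) := by
    have h1 : ∀ k ∈ Finset.univ, angular F j k z * Rcurv G k l i z
        = -(F z * (Rcurv G k i l z * pd (vy k) (pd (vy j) F) z)) := by
      intro k _
      have hr : Rcurv G k i l z = -Rcurv G k l i z := by
        show delx G l (Nc G k i) z - delx G i (Nc G k l) z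
          = -(delx G i (Nc G k l) z - delx G l (Nc G k i) z)
        ring
      have hb : pd (vy j) (pd (vy k) F) z = pd (vy k) (pd (vy j) F) z := schwarz hΩ hsmF hz
      show F z * pd (vy j) (pd (vy k) F) z * Rcurv G k l i z = _
      rw [hr, hb]; ring
    rw [Finset.sum_congr rfl h1, Finset.sum_neg_distrib, ← Finset.mul_sum]
  rw [t1, t2, t3]
  linear_combination (-(F z)) * hcomb


end PM
end

section
/- Suppose the curvature tensor of a spray Gⁱ on U is isotropic: Rⁱⱼₖ = αⱼ δⁱₖ − αₖ δⁱⱼ + βⱼₖ yⁱ for smooth functions αⱼ and βⱼₖ = −βₖⱼ on U × (ℝⁿ∖{0}). Then for every semi-basic 1-form θᵢ satisfying yʲ ∂θᵢ/∂yʲ = 0 and ∂θᵢ/∂yʲ = ∂θⱼ/∂yⁱ (the conditions L_Cθ = 0 and d_Jθ = 0), the curvature obstruction vanishes: (∂θₗ/∂yᵐ) Rᵐⱼₖ + (∂θⱼ/∂yᵐ) Rᵐₖₗ + (∂θₖ/∂yᵐ) Rᵐₗⱼ = 0 at every point, for all j, k, l. (Coordinate form of d_Rθ = α ∧ d_Jθ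 + β ⊗ L_Cθ: for isotropic sprays the obstruction to formal integrability is automatically satisfied.) -/
namespace PM

/-- For an isotropic spray (curvature `R = α∧J + β⊗C`), every semi-basic
1-form `θ` with `L_Cθ = 0` and `d_Jθ = 0` satisfies the curvature
obstruction `d_Rθ = 0`. -/
theorem isotropic_curvature_obstruction_vanishes {n : ℕ}
    (U : Set (Fin n → ℝ)) (hU : IsOpen U)
    (G : Fin n → E n → ℝ) (hG : IsSpray U G)
    (α : Fin n → E n → ℝ) (β : Fin n → Fin n → E n → ℝ)
    (hα : ∀ j, ContDiffOn ℝ (⊤ : ℕ∞) (α j) (Dom U))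
    (hβ : ∀ j k, ContDiffOn ℝ (⊤ : ℕ∞) (β j k) (Dom U))
    (hβa : ∀ j k, ∀ z ∈ Dom U, β j k z = - β k j z)
    (hiso : ∀ z ∈ Dom U, ∀ i j k,
      Rcurv G i j k z
        = α j z * (if i = k then (1:ℝ) else 0)
          - α k z * (if i = j then (1:ℝ) else 0) + β j k z * z.2 i)
    (θ : Fin n → E n → ℝ) (hθ : ∀ i, ContDiffOn ℝ (⊤ : ℕ∞) (θ i) (Dom U))
    (hLC : ∀ z ∈ Dom U, ∀ i, (∑ j, z.2 j * pdy j (θ i) z) = 0)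
    (hdJ : ∀ z ∈ Dom U, ∀ i j, pdy j (θ i) z = pdy i (θ j) z) :
    ∀ z ∈ Dom U, ∀ j k l,
      (∑ m, pdy m (θ l) z * Rcurv G m j k z)
        + (∑ m, pdy m (θ j) z * Rcurv G m k l z)
        + (∑ m, pdy m (θ k) z * Rcurv G m l j z) = 0 := by
  intro z hz j k l
  have key : ∀ p q r : Fin n,
      (∑ m, pdy m (θ r) z * Rcurv G m p q z)
        = α p z * pdy q (θ r) z - α q z * pdy p (θ r) z := by
    intro p q r
    have h1 : (∑ m, pdy m (θ r) z * Rcurv G m p q z)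
        = (∑ m, ((if m = q then α p z * pdy m (θ r) z else 0)
            - (if m = p then α q z * pdy m (θ r) z else 0)
            + β p q z * (z.2 m * pdy m (θ r) z))) := by
      apply Finset.sum_congr rfl
      intro m _
      rw [hiso z hz m p q]
      split_ifs <;> ring
    rw [h1, Finset.sum_add_distrib, Finset.sum_sub_distrib, ← Finset.mul_sum,
      hLC z hz r, Finset.sum_ite_eq' Finset.univ q, Finset.sum_ite_eq' Finset.univ p]
    simp
  rw [key j k l, key k l j, key l j k, hdJ z hz l k, hdJ z hz l j, hdJ z hz k j]
  ring

end PM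
end
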